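/- arXiv:2409.09842 — 4 statements merged into one kernel-verified Lean document; each statement's English description precedes it below -/
import Mathlib

section
/- Let ℓ ≥ 1, let ρ_1 ≤ ⋯ ≤ ρ_ℓ be integers with ρ_1 ≥ 2, and let n be an integer. Set N = Σ_{i=1}^ℓ ρ_i² + max_{1≤k≤ℓ}(ρ_k − Σ_{i=1}^{k−1} ρ_i). Then there exists an integer m ≥ 1 such that the vector σ = (1, …, 1, ρ_1, …, ρ_ℓ) ∈ ℤ^{m−1+ℓ} (with m−1 coordinates equal to 1 followed by ρ_1, …, ρ_ℓ) is a changemaker vector with ‖σ‖ = Σ_i σ_i² = n if and only if n ≥ N − 1. -/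
/-- The standard dot product on `ℤ^s`. -/
def dotInt {s : ℕ} (x y : Fin s → ℤ) : ℤ := ∑ i, x i * y i

/-- `σ` is a changemaker vector: `σ 0 = 1` (the first coordinate, 1-based `σ_1`) and
`σ_{i-1} ≤ σ_i ≤ 1 + σ_1 + ⋯ + σ_{i-1}` for all later coordinates. -/
def IsChangemaker {r : ℕ} (σ : Fin r → ℤ) : Prop :=
  (∀ i : Fin r, i.val = 0 → σ i = 1) ∧
  ∀ i : Fin r, 0 < i.val →
    σ ⟨i.val - 1, lt_of_le_of_lt (Nat.sub_le _ _) i.isLt⟩ ≤ σ i ∧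
    σ i ≤ 1 + ∑ j ∈ Finset.univ.filter (fun j : Fin r => j < i), σ j

/-- `v` is an obtuse superbase of the sublattice `L ⊆ ℤ^s`: all its members lie in `L`,
they span `L` over `ℤ`, they have pairwise nonpositive dot products, and they sum to zero. -/
def IsObtuseSuperbase {s d : ℕ} (L : Set (Fin s → ℤ)) (v : Fin d → (Fin s → ℤ)) : Prop :=
  (∀ i, v i ∈ L) ∧
  (∀ x ∈ L, x ∈ Submodule.span ℤ (Set.range v)) ∧
  (∀ i j, i ≠ j → dotInt (v i) (v j) ≤ 0) ∧
  (∑ i, v i) = 0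

/-- `v` is a nonzero vector of the changemaker lattice `⟨σ⟩^⊥` which is irreducible:
whenever `v = x + y` with `x, y` nonzero members of the lattice, `x · y ≤ -1`. -/
def IsIrreducibleVec {r : ℕ} (σ : Fin r → ℤ) (v : Fin r → ℤ) : Prop :=
  v ≠ 0 ∧ ∀ x y : Fin r → ℤ, dotInt σ x = 0 → dotInt σ y = 0 → x ≠ 0 → y ≠ 0 →
    x + y = v → dotInt x y ≤ -1

/-- A changemaker vector is tight if some coefficient `σ_k` (with `k ≥ 2`, 1-based)
equals `1 + σ_1 + ⋯ + σ_{k-1}`. -/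
def IsTightCM {r : ℕ} (σ : Fin r → ℤ) : Prop :=
  ∃ k : Fin r, 0 < k.val ∧
    σ k = 1 + ∑ j ∈ Finset.univ.filter (fun j : Fin r => j < k), σ j

/-- A changemaker vector is very slack if its last coordinate is at least `2` and
`σ_k ≤ σ_1 + ⋯ + σ_{k-1} - 1` for every `k` with `σ_k > 1`. -/
def IsVerySlack {r : ℕ} (σ : Fin r → ℤ) : Prop :=
  IsChangemaker σ ∧ (∀ i : Fin r, i.val = r - 1 → 2 ≤ σ i) ∧
  ∀ k : Fin r, 1 < σ k →
    σ k ≤ (∑ j ∈ Finset.univ.filter (fun j : Fin r => j < k), σ j) - 1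
lemma cm_filter_range (a r : ℕ) (h : a ≤ r) :
    (Finset.range r).filter (fun t => t < a) = Finset.range a := by
  ext t; simp only [Finset.mem_filter, Finset.mem_range]; omega

lemma cm_sum_filter_lt {r : ℕ} (f : Fin r → ℤ) (F : ℕ → ℤ)
    (hF : ∀ j : Fin r, F j.val = f j) (i : Fin r) :
    ∑ j ∈ Finset.univ.filter (fun j : Fin r => j < i), f j
      = ∑ t ∈ Finset.range i.val, F t := by
  rw [Finset.sum_filter]
  have h1 : ∀ j : Fin r, (if j < i then f j else 0)
      = (fun t => if t < i.val then F t else 0) j.val := by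
    intro j
    simp only [Fin.lt_def, hF]
  rw [Finset.sum_congr rfl (fun j _ => h1 j),
    Fin.sum_univ_eq_sum_range (fun t => if t < i.val then F t else 0) r,
    ← Finset.sum_filter, cm_filter_range i.val r (le_of_lt i.isLt)]

theorem changemaker_exists_iff_ge_N_sub_one
    (ℓ : ℕ) (hℓ : 0 < ℓ) (ρ : Fin ℓ → ℤ)
    (hmono : ∀ i j : Fin ℓ, i ≤ j → ρ i ≤ ρ j)
    (hρ2 : 2 ≤ ρ ⟨0, hℓ⟩) (n N : ℤ)
    (hN : N = (∑ i, (ρ i) ^ 2) +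
      Finset.univ.sup' (Finset.univ_nonempty_iff.mpr ⟨⟨0, hℓ⟩⟩)
        (fun k : Fin ℓ => ρ k - ∑ i ∈ Finset.univ.filter (fun i : Fin ℓ => i < k), ρ i)) :
    (∃ m : ℕ, 1 ≤ m ∧
      IsChangemaker (fun i : Fin (m - 1 + ℓ) =>
        if i.val < m - 1 then (1 : ℤ)
        else ρ ⟨i.val - (m - 1), by have := i.isLt; omega⟩) ∧
      (∑ i : Fin (m - 1 + ℓ),
        (if i.val < m - 1 then (1 : ℤ)
         else ρ ⟨i.val - (m - 1), by have := i.isLt; omega⟩) ^ 2) = n) ↔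
    N - 1 ≤ n := by
  classical
  set S : ℤ := ∑ i, (ρ i) ^ 2 with hS
  set g : Fin ℓ → ℤ := fun k => ρ k - ∑ i ∈ Finset.univ.filter (fun i : Fin ℓ => i < k), ρ i
    with hg
  set M : ℤ := Finset.univ.sup' (Finset.univ_nonempty_iff.mpr ⟨⟨0, hℓ⟩⟩) g with hMdef
  -- extension of ρ to ℕ
  set F : ℕ → ℤ := fun t => if h : t < ℓ then ρ ⟨t, h⟩ else 0 with hFdef
  have hFρ : ∀ j : Fin ℓ, F j.val = ρ j := by
    intro j; simp [hFdef, j.isLt]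
  have hρk2 : ∀ k : Fin ℓ, 2 ≤ ρ k := by
    intro k; exact le_trans hρ2 (hmono ⟨0, hℓ⟩ k (by simp [Fin.le_def]))
  have hfilterρ : ∀ k : Fin ℓ,
      ∑ i ∈ Finset.univ.filter (fun i : Fin ℓ => i < k), ρ i
        = ∑ t ∈ Finset.range k.val, F t := fun k => cm_sum_filter_lt ρ F hFρ k
  have hSF : ∑ t ∈ Finset.range ℓ, (F t) ^ 2 = S := by
    rw [hS, ← Fin.sum_univ_eq_sum_range (fun t => (F t) ^ 2) ℓ]
    exact Finset.sum_congr rfl fun j _ => by rw [hFρ]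
  have hM2 : 2 ≤ M := by
    refine le_trans ?_ (Finset.le_sup' g (Finset.mem_univ ⟨0, hℓ⟩))
    have : Finset.univ.filter (fun i : Fin ℓ => i < (⟨0, hℓ⟩ : Fin ℓ)) = ∅ := by
      ext i; simp [Fin.lt_def]
    simp [hg, this, hρ2]
  -- the σ-vector for a given m ≥ 2, with a := m - 1
  have key : ∀ m : ℕ, 2 ≤ m →
      (∀ i : Fin (m - 1 + ℓ),
        (if i.val < m - 1 then (1 : ℤ)
         else ρ ⟨i.val - (m - 1), by have := i.isLt; omega⟩)
        = (fun t => if t < m - 1 then (1 : ℤ) else F (t - (m - 1))) i.val) := by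
    intro m hm i
    by_cases h : i.val < m - 1
    · simp [h]
    · have hlt : i.val - (m - 1) < ℓ := by have := i.isLt; omega
      simp only [h, if_neg, hFdef, dif_pos hlt]
  -- norm computation
  have hnormsum : ∀ m : ℕ, 2 ≤ m →
      (∑ i : Fin (m - 1 + ℓ),
        (if i.val < m - 1 then (1 : ℤ)
         else ρ ⟨i.val - (m - 1), by have := i.isLt; omega⟩) ^ 2) = (m - 1 : ℕ) + S := by
    intro m hm
    rw [Finset.sum_congr rfl (fun i _ => by rw [key m hm i]),
      Fin.sum_univ_eq_sum_range
        (fun t => (if t < m - 1 then (1 : ℤ) else F (t - (m - 1))) ^ 2) (m - 1 + ℓ),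
      Finset.sum_range_add]
    have e1 : ∑ t ∈ Finset.range (m - 1),
        (if t < m - 1 then (1 : ℤ) else F (t - (m - 1))) ^ 2 = (m - 1 : ℕ) := by
      rw [Finset.sum_congr rfl (fun t ht => by
        rw [if_pos (Finset.mem_range.mp ht)]), Finset.sum_const]
      simp
    have e2 : ∑ t ∈ Finset.range ℓ,
        (if (m - 1) + t < m - 1 then (1 : ℤ) else F ((m - 1) + t - (m - 1))) ^ 2 = S := by
      rw [Finset.sum_congr rfl (fun t ht => by
        rw [if_neg (by omega), Nat.add_sub_cancel_left]), hSF]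
    rw [e1, e2]
  -- partial sums of σ
  have hpsum : ∀ m : ℕ, 2 ≤ m → ∀ i : Fin (m - 1 + ℓ),
      (∑ j ∈ Finset.univ.filter (fun j : Fin (m - 1 + ℓ) => j < i),
        (if j.val < m - 1 then (1 : ℤ)
         else ρ ⟨j.val - (m - 1), by have := j.isLt; omega⟩))
      = (min i.val (m - 1) : ℕ) + ∑ t ∈ Finset.range (i.val - (m - 1)), F t := by
    intro m hm i
    rw [cm_sum_filter_lt _ (fun t => if t < m - 1 then (1 : ℤ) else F (t - (m - 1)))
      (fun j => (key m hm j).symm) i]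
    by_cases h : i.val ≤ m - 1
    · have : i.val - (m - 1) = 0 := by omega
      rw [this, Finset.sum_range_zero,
        Finset.sum_congr rfl (fun t ht => if_pos (by have := Finset.mem_range.mp ht; omega)),
        Finset.sum_const]
      simp [Nat.min_eq_left h]
    · have hsplit : ∑ t ∈ Finset.range i.val,
          (if t < m - 1 then (1 : ℤ) else F (t - (m - 1)))
          = ∑ t ∈ Finset.range (m - 1),
              (if t < m - 1 then (1 : ℤ) else F (t - (m - 1)))
            + ∑ t ∈ Finset.range (i.val - (m - 1)),
              (if (m - 1) + t < m - 1 then (1 : ℤ) else F ((m - 1) + t - (m - 1))) := by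
        have hub : i.val = (m - 1) + (i.val - (m - 1)) := by omega
        rw [← Finset.sum_range_add, ← hub]
      have e1 : ∑ t ∈ Finset.range (m - 1),
          (if t < m - 1 then (1 : ℤ) else F (t - (m - 1))) = (m - 1 : ℕ) := by
        rw [Finset.sum_congr rfl (fun t ht => if_pos (Finset.mem_range.mp ht)),
          Finset.sum_const]
        simp
      have e2 : ∀ t ∈ Finset.range (i.val - (m - 1)),
          (if (m - 1) + t < m - 1 then (1 : ℤ) else F ((m - 1) + t - (m - 1))) = F t := by
        intro t ht; rw [if_neg (by omega), Nat.add_sub_cancel_left]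
      rw [hsplit, e1, Finset.sum_congr rfl e2]
      have hm' : min i.val (m - 1) = m - 1 := by omega
      rw [hm']
  constructor
  · rintro ⟨m, hm1, hcm, hnorm⟩
    have hm2 : 2 ≤ m := by
      by_contra hc
      have hm : m = 1 := by omega
      subst hm
      have h0 := hcm.1 ⟨0, by omega⟩ rfl
      simp only [Nat.sub_self, Nat.lt_irrefl, if_false] at h0
      have : ρ ⟨0, hℓ⟩ = 1 := by
        rw [← h0]
      omega
    -- M ≤ m
    have hMm : M ≤ (m : ℤ) := by
      rw [hMdef]
      refine Finset.sup'_le _ _ (fun k _ => ?_)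
      have hik : (m - 1) + k.val < m - 1 + ℓ := by have := k.isLt; omega
      set i : Fin (m - 1 + ℓ) := ⟨(m - 1) + k.val, hik⟩ with hidef
      have hub := (hcm.2 i (by simp [hidef]; omega)).2
      have hσi : (if i.val < m - 1 then (1 : ℤ)
          else ρ ⟨i.val - (m - 1), by have := i.isLt; omega⟩) = ρ k := by
        rw [if_neg (by simp [hidef])]
        congr 1
        exact Fin.ext (by simp [hidef])
      simp only at hub
      rw [hσi, hpsum m hm2 i] at hub
      have hmin : min i.val (m - 1) = m - 1 := by simp [hidef]
      have hsub : i.val - (m - 1) = k.val := by simp [hidef]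
      rw [hmin, hsub, ← hfilterρ k] at hub
      have hcast : ((m - 1 : ℕ) : ℤ) = (m : ℤ) - 1 := by
        have : (1 : ℕ) ≤ m := by omega
        push_cast [this]; ring
      rw [hg]
      simp only
      rw [hcast] at hub
      linarith
    have := hnormsum m hm2
    rw [this] at hnorm
    have hcast : ((m - 1 : ℕ) : ℤ) = (m : ℤ) - 1 := by
      have : (1 : ℕ) ≤ m := by omega
      push_cast [this]; ring
    rw [hcast] at hnorm
    have hm1' : (2 : ℤ) ≤ (m : ℤ) := by exact_mod_cast hm2
    rw [hN]
    linarith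
  · intro hn
    rw [hN] at hn
    set m : ℕ := (n - S + 1).toNat with hmdef
    have hmZ : (m : ℤ) = n - S + 1 := Int.toNat_of_nonneg (by linarith)
    have hm2 : 2 ≤ m := by
      have : (2 : ℤ) ≤ (m : ℤ) := by rw [hmZ]; linarith
      exact_mod_cast this
    have hMm : M ≤ (m : ℤ) := by rw [hmZ]; linarith
    have hρub : ∀ k : Fin ℓ, ρ k ≤ (m : ℤ) + ∑ t ∈ Finset.range k.val, F t := by
      intro k
      have := le_trans (Finset.le_sup' g (Finset.mem_univ k)) hMm
      rw [hg] at this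
      simp only at this
      rw [hfilterρ k] at this
      linarith
    refine ⟨m, by omega, ⟨?_, ?_⟩, ?_⟩
    · intro i hi
      beta_reduce
      rw [if_pos (by omega)]
    · intro i hi
      have hcast : ((m - 1 : ℕ) : ℤ) = (m : ℤ) - 1 := by
        have : (1 : ℕ) ≤ m := by omega
        push_cast [this]; ring
      constructor
      · -- monotonicity
        beta_reduce
        by_cases h1 : i.val < m - 1
        · rw [if_pos (by omega : i.val - 1 < m - 1), if_pos h1]
        · by_cases h2 : i.val = m - 1
          · rw [if_pos (by omega : i.val - 1 < m - 1), if_neg h1]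
            refine le_trans ?_ (hρk2 _)
            omega
          · rw [if_neg (by omega : ¬ (i.val - 1 < m - 1)), if_neg h1]
            refine hmono _ _ ?_
            simp [Fin.le_def]
            omega
      · -- upper bound
        beta_reduce
        rw [hpsum m hm2 i]
        by_cases h1 : i.val < m - 1
        · rw [if_pos h1]
          have : (0 : ℤ) ≤ (min i.val (m-1) : ℕ) := by positivity
          have hz : i.val - (m - 1) = 0 := by omega
          rw [hz, Finset.sum_range_zero]
          linarith
        · rw [if_neg h1]
          set k : Fin ℓ := ⟨i.val - (m - 1), by have := i.isLt; omega⟩ with hkdef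
          have := hρub k
          have hmin : min i.val (m - 1) = m - 1 := by omega
          rw [hmin, hcast]
          have hkval : k.val = i.val - (m - 1) := rfl
          rw [← hkval]
          linarith
    · rw [hnormsum m hm2]
      have hcast : ((m - 1 : ℕ) : ℤ) = (m : ℤ) - 1 := by
        have : (1 : ℕ) ≤ m := by omega
        push_cast [this]; ring
      rw [hcast]
      linarith
end

section
/- Let σ = (σ_1, …, σ_r) ∈ ℤ^r be a changemaker vector with σ_r ≥ 2, let L = ⟨σ⟩^⊥ ⊆ ℤ^r be the associated integer changemaker lattice, and let z ∈ L be irreducible. If σ_k = 1 for some index k, then |z_k| ≤ 2; moreover if σ is not tight, then |z_k| ≤ 1. -/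
lemma cm_mono_aux {r : ℕ} {σ : Fin r → ℤ} (hcm : IsChangemaker σ) :
    ∀ b (hb : b < r) a (hab : a ≤ b), σ ⟨a, lt_of_le_of_lt hab hb⟩ ≤ σ ⟨b, hb⟩ := by
  intro b
  induction b with
  | zero =>
    intro hb a hab
    have : a = 0 := Nat.le_zero.mp hab
    subst this; exact le_refl _
  | succ b ih =>
    intro hb a hab
    have hb' : b < r := Nat.lt_of_succ_lt hb
    have step : σ ⟨b, hb'⟩ ≤ σ ⟨b + 1, hb⟩ := by
      have h := (hcm.2 ⟨b + 1, hb⟩ (Nat.succ_pos b)).1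
      exact h
    rcases Nat.eq_or_lt_of_le hab with rfl | hlt
    · exact le_refl _
    · exact le_trans (ih hb' a (Nat.lt_succ_iff.mp hlt)) step

lemma cm_mono {r : ℕ} {σ : Fin r → ℤ} (hcm : IsChangemaker σ) {a b : Fin r}
    (hab : a ≤ b) : σ a ≤ σ b := by
  have := cm_mono_aux hcm b.val b.isLt a.val hab
  simpa using this

lemma cm_pos {r : ℕ} {σ : Fin r → ℤ} (hcm : IsChangemaker σ) (i : Fin r) : 1 ≤ σ i := by
  have h0 : σ ⟨0, i.pos⟩ = 1 := hcm.1 _ rfl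
  have := cm_mono hcm (a := ⟨0, i.pos⟩) (b := i) (by simp [Fin.le_def])
  linarith

lemma cm_h2 {r : ℕ} {σ : Fin r → ℤ} (hcm : IsChangemaker σ) (v : Fin r) :
    σ v ≤ 1 + ∑ u ∈ Finset.univ.filter (fun u : Fin r => u < v), σ u := by
  rcases Nat.eq_zero_or_pos v.val with h0 | hpos
  · have h1 : σ v = 1 := hcm.1 v h0
    have h2 : (0:ℤ) ≤ ∑ u ∈ Finset.univ.filter (fun u : Fin r => u < v), σ u :=
      Finset.sum_nonneg fun u _ => le_trans zero_le_one (cm_pos hcm u)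
    linarith
  · exact (hcm.2 v hpos).2

lemma subsetSum {r : ℕ} (σ : Fin r → ℤ) :
    ∀ T : Finset (Fin r), (∀ v ∈ T, 1 ≤ σ v) →
      (∀ v ∈ T, σ v ≤ 1 + ∑ u ∈ T.filter (fun u => u < v), σ u) →
      ∀ n : ℤ, 0 ≤ n → n ≤ ∑ u ∈ T, σ u → ∃ A ⊆ T, ∑ u ∈ A, σ u = n := by
  intro T
  induction T using Finset.strongInduction with
  | _ T IH =>
    intro h1 h2 n hn0 hn
    rcases T.eq_empty_or_nonempty with rfl | hne
    · refine ⟨∅, by simp, ?_⟩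
      simp only [Finset.sum_empty] at hn ⊢
      omega
    · set v := T.max' hne with hv
      have hvT : v ∈ T := T.max'_mem hne
      have hss : T.erase v ⊂ T := Finset.erase_ssubset hvT
      have hsum : σ v + ∑ u ∈ T.erase v, σ u = ∑ u ∈ T, σ u := Finset.add_sum_erase T σ hvT
      have h1' : ∀ w ∈ T.erase v, 1 ≤ σ w := fun w hw => h1 w (Finset.mem_of_mem_erase hw)
      have h2' : ∀ w ∈ T.erase v, σ w ≤ 1 + ∑ u ∈ (T.erase v).filter (fun u => u < w), σ u := by
        intro w hw
        have hwT := Finset.mem_of_mem_erase hw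
        have heq : (T.erase v).filter (fun u => u < w) = T.filter (fun u => u < w) := by
          apply Finset.ext; intro u
          simp only [Finset.mem_filter, Finset.mem_erase]
          constructor
          · rintro ⟨⟨_, hu⟩, h⟩; exact ⟨hu, h⟩
          · rintro ⟨hu, h⟩
            refine ⟨⟨?_, hu⟩, h⟩
            rintro rfl
            exact absurd (T.le_max' w hwT) (not_le.mpr h)
        rw [heq]; exact h2 w hwT
      by_cases hcase : n ≤ ∑ u ∈ T.erase v, σ u
      · obtain ⟨A, hA, hAs⟩ := IH (T.erase v) hss h1' h2' n hn0 hcase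
        exact ⟨A, hA.trans (Finset.erase_subset _ _), hAs⟩
      · push_neg at hcase
        have hcase' : (∑ u ∈ T.erase v, σ u) + 1 ≤ n := Int.add_one_le_iff.mpr hcase
        have hσv_le : σ v ≤ 1 + ∑ u ∈ T.erase v, σ u := by
          have hv2 := h2 v hvT
          have hsub : T.filter (fun u => u < v) ⊆ T.erase v := by
            intro u hu
            simp only [Finset.mem_filter] at hu
            exact Finset.mem_erase.mpr ⟨ne_of_lt hu.2, hu.1⟩
          have hmono : ∑ u ∈ T.filter (fun u => u < v), σ u ≤ ∑ u ∈ T.erase v, σ u :=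
            Finset.sum_le_sum_of_subset_of_nonneg hsub
              (fun u hu _ => le_trans zero_le_one (h1' u hu))
          linarith
        obtain ⟨A, hA, hAs⟩ := IH (T.erase v) hss h1' h2' (n - σ v) (by linarith) (by linarith)
        refine ⟨insert v A, ?_, ?_⟩
        · intro u hu
          rcases Finset.mem_insert.mp hu with rfl | hu
          · exact hvT
          · exact (Finset.erase_subset _ _) (hA hu)
        · rw [Finset.sum_insert (fun hvA => (Finset.notMem_erase v T) (hA hvA))]
          linarith

lemma mainStep {r : ℕ} (σ z : Fin r → ℤ) (hz : dotInt σ z = 0)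
    (hirr : IsIrreducibleVec σ z) (k j : Fin r) (hkj : k ≠ j)
    (hσk : σ k = 1) (hzk : 2 ≤ z k) (hzj : z j ≤ 0)
    (c : ℤ) (hc : c = 1 ∨ (c = 2 ∧ 3 ≤ z k))
    (A : Finset (Fin r)) (hkA : k ∉ A) (hjA : j ∉ A)
    (hA1 : ∀ u ∈ A, 1 ≤ z u)
    (hsum : c + ∑ u ∈ A, σ u = σ j) : False := by
  set x : Fin r → ℤ := fun u =>
    (if u = k then c else 0) + (if u ∈ A then 1 else 0) + (if u = j then -1 else 0) with hxdef
  have dotc : ∀ w : Fin r → ℤ, dotInt w x = w k * c + ∑ u ∈ A, w u - w j := by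
    intro w
    have e1 : ∑ u, w u * (if u = k then c else 0) = w k * c := by
      simp [mul_ite, Finset.sum_ite_eq']
    have e2 : ∑ u, w u * (if u ∈ A then (1:ℤ) else 0) = ∑ u ∈ A, w u := by
      simp [mul_ite, Finset.sum_ite_mem]
    have e3 : ∑ u, w u * (if u = j then (-1:ℤ) else 0) = -w j := by
      simp [mul_ite, Finset.sum_ite_eq']
    calc dotInt w x
        = ∑ u, (w u * (if u = k then c else 0) + w u * (if u ∈ A then 1 else 0)
            + w u * (if u = j then -1 else 0)) := by
          simp only [dotInt, hxdef, mul_add]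
      _ = w k * c + ∑ u ∈ A, w u - w j := by
          rw [Finset.sum_add_distrib, Finset.sum_add_distrib, e1, e2, e3]; ring
  have hσx : dotInt σ x = 0 := by rw [dotc σ, hσk]; linarith
  have hxk : x k = c := by simp [hxdef, hkj, hkA]
  have hxj : x j = -1 := by simp [hxdef, hjA, Ne.symm hkj]
  have hxne : x ≠ 0 := by
    intro h
    have := congrFun h j
    rw [hxj] at this
    simp at this
  set y := z - x with hy
  have hσy : dotInt σ y = 0 := by
    have h : dotInt σ y = dotInt σ z - dotInt σ x := by
      simp [dotInt, hy, mul_sub, Finset.sum_sub_distrib]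
    rw [h, hz, hσx]; ring
  have hyne : y ≠ 0 := by
    intro h
    have hzx : z = x := by rwa [hy, sub_eq_zero] at h
    have hc' : z k = c := by rw [hzx, hxk]
    rcases hc with rfl | ⟨rfl, h3⟩ <;> omega
  have hxyz : x + y = z := by rw [hy]; ring
  have hle := hirr.2 x y hσx hσy hxne hyne hxyz
  have hAcard : (A.card : ℤ) ≤ ∑ u ∈ A, z u := by
    have h := Finset.sum_le_sum hA1
    simpa using h
  have hxz : dotInt z x = z k * c + ∑ u ∈ A, z u - z j := dotc z
  have hxx : dotInt x x = c * c + (A.card : ℤ) + 1 := by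
    rw [dotc x, hxk, hxj]
    have hone : ∀ u ∈ A, x u = 1 := by
      intro u hu
      have h1 : u ≠ k := fun h => hkA (h ▸ hu)
      have h2 : u ≠ j := fun h => hjA (h ▸ hu)
      simp [hxdef, h1, h2, hu]
    rw [Finset.sum_congr rfl hone, Finset.sum_const]
    simp only [nsmul_eq_mul, mul_one]
    ring
  have hsplit : dotInt x y = dotInt z x - dotInt x x := by
    have h1 : dotInt x y = ∑ u, x u * z u - ∑ u, x u * x u := by
      simp [dotInt, hy, mul_sub, Finset.sum_sub_distrib]
    have h2 : ∑ u, x u * z u = dotInt z x := by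
      simp [dotInt, mul_comm]
    rw [h1, h2]; rfl
  rw [hsplit, hxz, hxx] at hle
  rcases hc with rfl | ⟨rfl, h3⟩ <;> linarith

lemma keyLemma {r : ℕ} (hr : 0 < r) (σ : Fin r → ℤ) (hcm : IsChangemaker σ)
    (z : Fin r → ℤ) (hz : dotInt σ z = 0) (hirr : IsIrreducibleVec σ z)
    (k : Fin r) (hk : σ k = 1)
    (hbig : 3 ≤ z k ∨ (¬ IsTightCM σ ∧ 2 ≤ z k)) : False := by
  have hzk2 : 2 ≤ z k := by rcases hbig with h | ⟨_, h⟩ <;> omega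
  have hall : ∀ n : ℕ, ∀ hn : n < r, 1 ≤ z ⟨n, hn⟩ := by
    intro n
    induction n using Nat.strong_induction_on with
    | _ n IH =>
      intro hn
      set j : Fin r := ⟨n, hn⟩ with hjdef
      by_contra hcon
      push_neg at hcon
      have hzj : z j ≤ 0 := by omega
      have hσj1 : 1 ≤ σ j := cm_pos hcm j
      by_cases hσj : σ j = 1
      · by_cases hjk : j = k
        · rw [hjk] at hzj; omega
        · exact mainStep σ z hz hirr k j (Ne.symm hjk) hk hzk2 hzj 1 (Or.inl rfl) ∅
            (by simp) (by simp) (by simp) (by simp [hσj])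
      · have hσj2 : 2 ≤ σ j := by omega
        have hkj : k < j := by
          by_contra h
          have := cm_mono hcm (not_lt.mp h)
          omega
        have hjpos : 0 < j.val := by
          have : k.val < j.val := hkj
          omega
        set Sj := Finset.univ.filter (fun u : Fin r => u < j) with hSj
        have hkSj : k ∈ Sj := by simp [hSj, hkj]
        have hjSj : j ∉ Sj := by simp [hSj]
        have hA1gen : ∀ (A : Finset (Fin r)), A ⊆ Sj → ∀ u ∈ A, 1 ≤ z u := by
          intro A hAS u hu
          have huS := hAS hu
          have huj : u < j := by
            simp only [hSj, Finset.mem_filter] at huS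
            exact huS.2
          have hulen : u.val < n := huj
          have := IH u.val hulen u.isLt
          simpa using this
        have hcmj : σ j ≤ 1 + ∑ u ∈ Sj, σ u := cm_h2 hcm j
        rcases hbig with h3 | ⟨hnt, _⟩
        · -- general case, T = Sj
          have h2T : ∀ v ∈ Sj, σ v ≤ 1 + ∑ u ∈ Sj.filter (fun u => u < v), σ u := by
            intro v hv
            have hvj : v < j := by
              simp only [hSj, Finset.mem_filter] at hv
              exact hv.2
            have heq : Sj.filter (fun u => u < v)
                = Finset.univ.filter (fun u : Fin r => u < v) := by
              apply Finset.ext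
              intro u
              simp only [hSj, Finset.filter_filter, Finset.mem_filter, Finset.mem_univ, true_and]
              exact ⟨fun h => h.2, fun h => ⟨lt_trans h hvj, h⟩⟩
            rw [heq]
            exact cm_h2 hcm v
          obtain ⟨A, hAT, hAs⟩ := subsetSum σ Sj (fun v _ => cm_pos hcm v) h2T
            (σ j - 1) (by omega) (by omega)
          by_cases hkA : k ∈ A
          · have herase : σ k + ∑ u ∈ A.erase k, σ u = ∑ u ∈ A, σ u :=
              Finset.add_sum_erase A σ hkA
            refine mainStep σ z hz hirr k j (ne_of_lt hkj) hk hzk2 hzj 2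
              (Or.inr ⟨rfl, h3⟩) (A.erase k) (Finset.notMem_erase k A)
              (fun h => hjSj (hAT (Finset.mem_of_mem_erase h)))
              (fun u hu => hA1gen A hAT u (Finset.mem_of_mem_erase hu)) (by omega)
          · exact mainStep σ z hz hirr k j (ne_of_lt hkj) hk hzk2 hzj 1 (Or.inl rfl) A hkA
              (fun h => hjSj (hAT h)) (hA1gen A hAT) (by omega)
        · -- non-tight case, T = Sj.erase k
          have hnt' : ∀ v : Fin r, 0 < v.val →
              σ v ≠ 1 + ∑ u ∈ Finset.univ.filter (fun u : Fin r => u < v), σ u := by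
            intro v hv
            intro heq
            exact hnt ⟨v, hv, heq⟩
          have hntle : ∀ v : Fin r, 0 < v.val →
              σ v ≤ ∑ u ∈ Finset.univ.filter (fun u : Fin r => u < v), σ u := by
            intro v hv
            have h1 := cm_h2 hcm v
            have h2 := hnt' v hv
            omega
          have h1T : ∀ v ∈ Sj.erase k, 1 ≤ σ v := fun v _ => cm_pos hcm v
          have h2T : ∀ v ∈ Sj.erase k,
              σ v ≤ 1 + ∑ u ∈ (Sj.erase k).filter (fun u => u < v), σ u := by
            intro v hv
            obtain ⟨hvk, hvSj⟩ := Finset.mem_erase.mp hv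
            have hvj : v < j := by
              simp only [hSj, Finset.mem_filter] at hvSj
              exact hvSj.2
            have heq : (Sj.erase k).filter (fun u => u < v)
                = (Finset.univ.filter (fun u : Fin r => u < v)).erase k := by
              apply Finset.ext
              intro u
              simp only [hSj, Finset.mem_filter, Finset.mem_erase, Finset.mem_univ, true_and]
              constructor
              · rintro ⟨⟨hne, _⟩, hlt⟩; exact ⟨hne, hlt⟩
              · rintro ⟨hne, hlt⟩; exact ⟨⟨hne, lt_trans hlt hvj⟩, hlt⟩
            rw [heq]
            rcases lt_or_gt_of_ne hvk with hlt | hgt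
            · -- v < k : k not below v
              have hknotin : k ∉ Finset.univ.filter (fun u : Fin r => u < v) := by
                simp only [Finset.mem_filter, Finset.mem_univ, true_and]
                exact not_lt.mpr (le_of_lt hlt)
              rw [Finset.erase_eq_of_notMem hknotin]
              exact cm_h2 hcm v
            · -- k < v
              have hvpos : 0 < v.val := by
                have : k.val < v.val := hgt
                omega
              have hkin : k ∈ Finset.univ.filter (fun u : Fin r => u < v) := by
                simp only [Finset.mem_filter, Finset.mem_univ, true_and]
                exact hgt
              have herase := Finset.add_sum_erase _ σ hkin
              have := hntle v hvpos
              omega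
          have hkin2 : σ k + ∑ u ∈ Sj.erase k, σ u = ∑ u ∈ Sj, σ u :=
            Finset.add_sum_erase Sj σ hkSj
          have hbound : σ j - 1 ≤ ∑ u ∈ Sj.erase k, σ u := by
            have := hntle j hjpos
            rw [← hSj] at this
            omega
          obtain ⟨A, hAT, hAs⟩ := subsetSum σ (Sj.erase k) h1T h2T (σ j - 1) (by omega) hbound
          have hAS : A ⊆ Sj := hAT.trans (Finset.erase_subset _ _)
          exact mainStep σ z hz hirr k j (ne_of_lt hkj) hk hzk2 hzj 1 (Or.inl rfl) A
            (fun h => Finset.notMem_erase k Sj (hAT h))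
            (fun h => hjSj (hAS h)) (hA1gen A hAS) (by omega)
  have hge : ∀ u : Fin r, 1 ≤ z u := by
    intro u
    have := hall u.val u.isLt
    simpa using this
  have hbig' : (r : ℤ) ≤ dotInt σ z := by
    have h1 : ∀ u ∈ Finset.univ, (1:ℤ) ≤ σ u * z u := by
      intro u _
      have := cm_pos hcm u
      have := hge u
      nlinarith
    have h2 := Finset.sum_le_sum h1
    simp only [Finset.sum_const, Finset.card_univ, Fintype.card_fin, nsmul_eq_mul, mul_one] at h2
    exact h2
  rw [hz] at hbig'
  have : (0:ℤ) < r := by exact_mod_cast hr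
  linarith

lemma dot_neg_right {r : ℕ} (a b : Fin r → ℤ) : dotInt a (-b) = -dotInt a b := by
  simp [dotInt, mul_neg]

lemma neg_irr {r : ℕ} {σ z : Fin r → ℤ} (hirr : IsIrreducibleVec σ z) :
    IsIrreducibleVec σ (-z) := by
  obtain ⟨hz0, h⟩ := hirr
  refine ⟨neg_ne_zero.mpr hz0, ?_⟩
  intro x y hx hy hx0 hy0 hxy
  have hxy' : (-x) + (-y) = z := by
    rw [← neg_add, hxy, neg_neg]
  have hx' : dotInt σ (-x) = 0 := by rw [dot_neg_right, hx, neg_zero]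
  have hy' : dotInt σ (-y) = 0 := by rw [dot_neg_right, hy, neg_zero]
  have := h (-x) (-y) hx' hy' (neg_ne_zero.mpr hx0) (neg_ne_zero.mpr hy0) hxy'
  have heq : dotInt (-x) (-y) = dotInt x y := by simp [dotInt]
  rwa [heq] at this

theorem irreducible_coefficient_bound_unit_coordinate
    (r : ℕ) (hr : 0 < r) (σ : Fin r → ℤ) (hcm : IsChangemaker σ)
    (hlast : ∀ i : Fin r, i.val = r - 1 → 2 ≤ σ i)
    (z : Fin r → ℤ) (hz : dotInt σ z = 0) (hirr : IsIrreducibleVec σ z)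
    (k : Fin r) (hk : σ k = 1) :
    |z k| ≤ 2 ∧ (¬ IsTightCM σ → |z k| ≤ 1) := by
  have hnegz : dotInt σ (-z) = 0 := by rw [dot_neg_right, hz, neg_zero]
  have hirrn := neg_irr hirr
  constructor
  · rw [abs_le]
    constructor
    · by_contra h
      push_neg at h
      have h3 : 3 ≤ (-z) k := by
        have : (-z) k = -(z k) := rfl
        omega
      exact keyLemma hr σ hcm (-z) hnegz hirrn k hk (Or.inl h3)
    · by_contra h
      push_neg at h
      exact keyLemma hr σ hcm z hz hirr k hk (Or.inl (by omega))
  · intro hnt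
    rw [abs_le]
    constructor
    · by_contra h
      push_neg at h
      have h2 : 2 ≤ (-z) k := by
        have : (-z) k = -(z k) := rfl
        omega
      exact keyLemma hr σ hcm (-z) hnegz hirrn k hk (Or.inr ⟨hnt, h2⟩)
    · by_contra h
      push_neg at h
      exact keyLemma hr σ hcm z hz hirr k hk (Or.inr ⟨hnt, by omega⟩)
end

section
/- Let σ = (σ_1, …, σ_r) ∈ ℤ^r be a changemaker vector with σ_r ≥ 2 and let L = ⟨σ⟩^⊥ ⊆ ℤ^r be the associated integer changemaker lattice. If L admits an obtuse superbase, then L admits an obtuse superbase B such that for every index k with 2 ≤ k ≤ r and σ_k = σ_{k−1}, the vector e_{k−1} − e_k belongs to B, where e_1, …, e_r is the standard basis of ℤ^r. -/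
namespace CM

variable {s : ℕ}

lemma dot_comm (x y : Fin s → ℤ) : dotInt x y = dotInt y x := by
  unfold dotInt; exact Finset.sum_congr rfl fun i _ => mul_comm _ _

lemma dot_add_left (x y z : Fin s → ℤ) : dotInt (x + y) z = dotInt x z + dotInt y z := by
  unfold dotInt; rw [← Finset.sum_add_distrib]
  exact Finset.sum_congr rfl fun i _ => by simp [add_mul]

lemma dot_add_right (x y z : Fin s → ℤ) : dotInt x (y + z) = dotInt x y + dotInt x z := by
  rw [dot_comm, dot_add_left, dot_comm y x, dot_comm z x]

lemma dot_neg_left (x z : Fin s → ℤ) : dotInt (-x) z = -dotInt x z := by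
  unfold dotInt; rw [← Finset.sum_neg_distrib]
  exact Finset.sum_congr rfl fun i _ => by simp

lemma dot_sub_left (x y z : Fin s → ℤ) : dotInt (x - y) z = dotInt x z - dotInt y z := by
  rw [sub_eq_add_neg, dot_add_left, dot_neg_left]; ring

lemma dot_sub_right (x y z : Fin s → ℤ) : dotInt x (y - z) = dotInt x y - dotInt x z := by
  rw [dot_comm, dot_sub_left, dot_comm y x, dot_comm z x]

lemma dot_zero_left (z : Fin s → ℤ) : dotInt 0 z = 0 := by unfold dotInt; simp

lemma dot_zero_right (z : Fin s → ℤ) : dotInt z 0 = 0 := by rw [dot_comm, dot_zero_left]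

lemma dot_sum_left {α : Type*} (t : Finset α) (f : α → Fin s → ℤ) (z : Fin s → ℤ) :
    dotInt (∑ a ∈ t, f a) z = ∑ a ∈ t, dotInt (f a) z := by
  classical
  induction t using Finset.induction with
  | empty => simp [dot_zero_left]
  | @insert a t' h ih => rw [Finset.sum_insert h, Finset.sum_insert h, dot_add_left, ih]

lemma dot_sum_right {α : Type*} (t : Finset α) (f : α → Fin s → ℤ) (z : Fin s → ℤ) :
    dotInt z (∑ a ∈ t, f a) = ∑ a ∈ t, dotInt z (f a) := by
  rw [dot_comm, dot_sum_left]; exact Finset.sum_congr rfl fun a _ => dot_comm _ _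

lemma dot_self_nonneg (x : Fin s → ℤ) : 0 ≤ dotInt x x :=
  Finset.sum_nonneg fun i _ => mul_self_nonneg _

variable {r : ℕ}

lemma sigma_pos {σ : Fin r → ℤ} (hcm : IsChangemaker σ) : ∀ i : Fin r, 1 ≤ σ i := by
  suffices h : ∀ n : ℕ, ∀ i : Fin r, i.val = n → 1 ≤ σ i by
    intro i; exact h i.val i rfl
  intro n
  induction n with
  | zero => intro i hn; rw [hcm.1 i hn]
  | succ n ih =>
      intro i hn
      have hpos : 0 < i.val := by omega
      have h1 := (hcm.2 i hpos).1
      have h2 : (⟨i.val - 1, lt_of_le_of_lt (Nat.sub_le _ _) i.isLt⟩ : Fin r).val = n := by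
        simp [hn]
      exact le_trans (ih _ h2) h1

lemma norm_two_le {σ : Fin r → ℤ} (hcm : IsChangemaker σ) {x : Fin r → ℤ}
    (hx : dotInt σ x = 0) (hne : x ≠ 0) : 2 ≤ dotInt x x := by
  by_contra h
  push_neg at h
  have h0 : 0 ≤ dotInt x x := dot_self_nonneg x
  have : ∃ i, x i ≠ 0 := by
    by_contra hall; push_neg at hall; exact hne (funext hall)
  obtain ⟨i, hi⟩ := this
  have hi1 : 1 ≤ x i * x i := by
    have := Int.one_le_abs hi; nlinarith [abs_mul_abs_self (x i)]
  have hrest : ∀ j, j ≠ i → x j = 0 := by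
    intro j hj
    by_contra hjne
    have hj1 : 1 ≤ x j * x j := by
      have := Int.one_le_abs hjne; nlinarith [abs_mul_abs_self (x j)]
    have hle : x i * x i + x j * x j ≤ dotInt x x := by
      have hjmem : j ∈ Finset.univ.erase i := Finset.mem_erase.mpr ⟨hj, Finset.mem_univ j⟩
      have h2 : x j * x j ≤ ∑ k ∈ Finset.univ.erase i, x k * x k :=
        Finset.single_le_sum (f := fun k => x k * x k)
          (fun k _ => mul_self_nonneg (x k)) hjmem
      have h3 : x i * x i + ∑ k ∈ Finset.univ.erase i, x k * x k = ∑ k, x k * x k :=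
        Finset.add_sum_erase Finset.univ (fun k => x k * x k) (Finset.mem_univ i)
      unfold dotInt
      linarith
    linarith
  have hdx : dotInt σ x = σ i * x i := by
    unfold dotInt
    rw [Finset.sum_eq_single i]
    · intro b _ hb; rw [hrest b hb]; ring
    · intro hb; exact absurd (Finset.mem_univ i) hb
  have hsi := sigma_pos hcm i
  rcases lt_or_gt_of_ne hi with h' | h'
  · nlinarith
  · nlinarith

lemma dot_self_eq_zero {x : Fin s → ℤ} (h : dotInt x x = 0) : x = 0 := by
  funext i
  have h2 : ∀ j ∈ Finset.univ, (0:ℤ) ≤ x j * x j := fun j _ => mul_self_nonneg _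
  have h3 := (Finset.sum_eq_zero_iff_of_nonneg h2).mp h i (Finset.mem_univ i)
  have h4 := mul_self_eq_zero.mp h3
  simp [h4]

lemma nested_dot_nonneg (v : Fin r → (Fin r → ℤ))
    (hobt : ∀ i j, i ≠ j → dotInt (v i) (v j) ≤ 0)
    (hsum : (∑ i, v i) = 0) {A B : Finset (Fin r)} (hBA : B ⊆ A) :
    0 ≤ dotInt (∑ i ∈ A, v i) (∑ j ∈ B, v j) := by
  rw [dot_sum_right]
  apply Finset.sum_nonneg
  intro j hj
  have hjA : j ∈ A := hBA hj
  have hsplit : dotInt (∑ i ∈ A, v i) (v j) + dotInt (∑ i ∈ Aᶜ, v i) (v j) = 0 := by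
    rw [← dot_add_left, Finset.sum_add_sum_compl A v, hsum, dot_zero_left]
  have hneg : dotInt (∑ i ∈ Aᶜ, v i) (v j) ≤ 0 := by
    rw [dot_sum_left]
    apply Finset.sum_nonpos
    intro i hi
    exact hobt i j (fun h => by subst h; exact (Finset.mem_compl.mp hi) hjA)
  linarith

lemma subset_rep (hr : 0 < r) (v : Fin r → (Fin r → ℤ))
    (hobt : ∀ i j, i ≠ j → dotInt (v i) (v j) ≤ 0)
    (hsum : (∑ i, v i) = 0)
    {σ : Fin r → ℤ} (hmem : ∀ i, dotInt σ (v i) = 0)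
    (hcm : IsChangemaker σ)
    {w : Fin r → ℤ} (hw : w ∈ Submodule.span ℤ (Set.range v))
    (hw2 : dotInt w w = 2) :
    ∃ S : Finset (Fin r), w = ∑ i ∈ S, v i := by
  classical
  obtain ⟨c, hc⟩ := (Submodule.mem_span_range_iff_exists_fun ℤ).mp hw
  have hne : (Finset.univ : Finset (Fin r)).Nonempty := ⟨⟨0, hr⟩, Finset.mem_univ _⟩
  set m := Finset.univ.inf' hne c with hm
  set n := fun i => c i - m with hndef
  have hn0 : ∀ i, 0 ≤ n i := fun i => by
    have := Finset.inf'_le c (Finset.mem_univ i); simp only [hndef]; omega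
  have hcw : ∑ i, n i • v i = w := by
    have heq : ∑ i, n i • v i = ∑ i, c i • v i - m • ∑ i, v i := by
      rw [Finset.smul_sum, ← Finset.sum_sub_distrib]
      exact Finset.sum_congr rfl fun i _ => by rw [hndef]; rw [sub_smul]
    rw [heq, hsum, smul_zero, sub_zero, hc]
  set M := Finset.univ.sup' hne n with hM
  have hnM : ∀ i, n i ≤ M := fun i => Finset.le_sup' n (Finset.mem_univ i)
  set u : ℤ → (Fin r → ℤ) := fun t => ∑ i ∈ Finset.univ.filter (fun i => t ≤ n i), v i with hu
  set I := Finset.Icc (1:ℤ) M with hI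
  have hut : ∀ t, u t = ∑ i ∈ Finset.univ.filter (fun i => t ≤ n i), v i := fun t => rfl
  have hlayer : w = ∑ t ∈ I, u t := by
    have key : ∀ i : Fin r, n i • v i = ∑ t ∈ I, if t ≤ n i then v i else 0 := by
      intro i
      have hfilter : I.filter (fun t => t ≤ n i) = Finset.Icc 1 (n i) := by
        apply Finset.ext
        intro t
        simp only [Finset.mem_filter, hI, Finset.mem_Icc]
        have := hnM i
        constructor
        · rintro ⟨⟨h1, _⟩, h3⟩; exact ⟨h1, h3⟩
        · rintro ⟨h1, h2⟩; exact ⟨⟨h1, le_trans h2 this⟩, h2⟩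
      rw [← Finset.sum_filter, hfilter, Finset.sum_const, Int.card_Icc]
      have h5 : (n i + 1 - 1).toNat = (n i).toNat := by omega
      rw [h5, ← natCast_zsmul, Int.toNat_of_nonneg (hn0 i)]
    calc w = ∑ i, n i • v i := hcw.symm
      _ = ∑ i : Fin r, ∑ t ∈ I, if t ≤ n i then v i else 0 :=
          Finset.sum_congr rfl fun i _ => key i
      _ = ∑ t ∈ I, ∑ i : Fin r, if t ≤ n i then v i else 0 := Finset.sum_comm
      _ = ∑ t ∈ I, u t := Finset.sum_congr rfl fun t _ => by
          rw [hut t, Finset.sum_filter]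
  have huσ : ∀ t, dotInt σ (u t) = 0 := by
    intro t
    rw [hut t, dot_sum_right]
    exact Finset.sum_eq_zero fun i _ => hmem i
  have hcross : ∀ t ∈ I, ∀ t' ∈ I, t ≠ t' → 0 ≤ dotInt (u t) (u t') := by
    intro t _ t' _ htt
    rcases lt_or_gt_of_ne htt with h | h
    · rw [hut t, hut t']
      refine nested_dot_nonneg v hobt hsum (fun i hi => ?_)
      simp only [Finset.mem_filter] at hi ⊢
      exact ⟨hi.1, le_trans (le_of_lt h) hi.2⟩
    · rw [dot_comm, hut t, hut t']
      refine nested_dot_nonneg v hobt hsum (fun i hi => ?_)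
      simp only [Finset.mem_filter] at hi ⊢
      exact ⟨hi.1, le_trans (le_of_lt h) hi.2⟩
  have hdiag : ∑ t ∈ I, dotInt (u t) (u t) ≤ 2 := by
    have hdd : dotInt w w = ∑ t ∈ I, ∑ t' ∈ I, dotInt (u t) (u t') := by
      rw [hlayer, dot_sum_left]
      exact Finset.sum_congr rfl fun t _ => dot_sum_right _ _ _
    rw [hw2] at hdd
    have hge : ∀ t ∈ I, dotInt (u t) (u t) ≤ ∑ t' ∈ I, dotInt (u t) (u t') := by
      intro t ht
      rw [← Finset.add_sum_erase I _ ht]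
      have hnn : 0 ≤ ∑ t' ∈ I.erase t, dotInt (u t) (u t') :=
        Finset.sum_nonneg fun t' ht' => by
          obtain ⟨hne', hmem'⟩ := Finset.mem_erase.mp ht'
          exact hcross t ht t' hmem' (Ne.symm hne')
      linarith
    calc ∑ t ∈ I, dotInt (u t) (u t) ≤ ∑ t ∈ I, ∑ t' ∈ I, dotInt (u t) (u t') :=
          Finset.sum_le_sum hge
      _ = 2 := hdd.symm
  have hwne : w ≠ 0 := fun h => by rw [h, dot_zero_left] at hw2; exact absurd hw2 (by norm_num)
  have hex : ∃ t0 ∈ I, u t0 ≠ 0 := by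
    by_contra hall
    push_neg at hall
    exact hwne (by rw [hlayer]; exact Finset.sum_eq_zero hall)
  obtain ⟨t0, ht0I, ht0⟩ := hex
  have hothers : ∀ t ∈ I, t ≠ t0 → u t = 0 := by
    intro t htI htne
    by_contra hne'
    have h1 : 2 ≤ dotInt (u t) (u t) := norm_two_le hcm (huσ t) hne'
    have h2 : 2 ≤ dotInt (u t0) (u t0) := norm_two_le hcm (huσ t0) ht0
    have hsub : ({t, t0} : Finset ℤ) ⊆ I := by
      intro x hx
      rcases Finset.mem_insert.mp hx with h | h
      · subst h; exact htI
      · rw [Finset.mem_singleton.mp h]; exact ht0I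
    have hle := Finset.sum_le_sum_of_subset_of_nonneg hsub
      (fun t' _ _ => dot_self_nonneg (u t'))
    rw [Finset.sum_pair htne] at hle
    linarith
  refine ⟨Finset.univ.filter (fun i => t0 ≤ n i), ?_⟩
  rw [hlayer, ← Finset.add_sum_erase I u ht0I, ← hut t0]
  have hz : ∑ t ∈ I.erase t0, u t = 0 := Finset.sum_eq_zero fun t ht =>
    hothers t (Finset.mem_erase.mp ht).2 (Finset.mem_erase.mp ht).1
  rw [hz, add_zero]




variable {r : ℕ}

/-- classification of a sum of nonpositive integers equal to -1 -/
lemma sum_classify1 {α : Type*} [DecidableEq α] (s : Finset α) (f : α → ℤ)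
    (hle : ∀ x ∈ s, f x ≤ 0) (hsum : ∑ x ∈ s, f x = -1) :
    ∃ a ∈ s, f a = -1 ∧ ∀ x ∈ s, x ≠ a → f x = 0 := by
  have hex : ∃ a ∈ s, f a < 0 := by
    by_contra hall
    push_neg at hall
    have : ∑ x ∈ s, f x = 0 := by
      rw [Finset.sum_eq_zero_iff_of_nonpos hle]
      exact fun x hx => le_antisymm (hle x hx) (hall x hx)
    omega
  obtain ⟨a, ha, hfa⟩ := hex
  have herase : ∑ x ∈ s.erase a, f x = -1 - f a := by
    have := Finset.add_sum_erase s f ha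
    omega
  have hle' : ∀ x ∈ s.erase a, f x ≤ 0 := fun x hx => hle x (Finset.mem_erase.mp hx).2
  have hnonpos : ∑ x ∈ s.erase a, f x ≤ 0 := Finset.sum_nonpos hle'
  have hfa1 : f a = -1 := by omega
  have hzero : ∑ x ∈ s.erase a, f x = 0 := by omega
  refine ⟨a, ha, hfa1, fun x hx hxa => ?_⟩
  exact (Finset.sum_eq_zero_iff_of_nonpos hle').mp hzero x
    (Finset.mem_erase.mpr ⟨hxa, hx⟩)

/-- classification of a sum of nonpositive integers equal to -2 -/
lemma sum_classify2 {α : Type*} [DecidableEq α] (s : Finset α) (f : α → ℤ)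
    (hle : ∀ x ∈ s, f x ≤ 0) (hsum : ∑ x ∈ s, f x = -2) :
    (∃ a ∈ s, f a = -2 ∧ ∀ x ∈ s, x ≠ a → f x = 0) ∨
    (∃ a ∈ s, ∃ c ∈ s, a ≠ c ∧ f a = -1 ∧ f c = -1 ∧
      ∀ x ∈ s, x ≠ a → x ≠ c → f x = 0) := by
  have hex : ∃ a ∈ s, f a < 0 := by
    by_contra hall
    push_neg at hall
    have : ∑ x ∈ s, f x = 0 := by
      rw [Finset.sum_eq_zero_iff_of_nonpos hle]
      exact fun x hx => le_antisymm (hle x hx) (hall x hx)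
    omega
  obtain ⟨a, ha, hfa⟩ := hex
  have herase : ∑ x ∈ s.erase a, f x = -2 - f a := by
    have := Finset.add_sum_erase s f ha
    omega
  have hle' : ∀ x ∈ s.erase a, f x ≤ 0 := fun x hx => hle x (Finset.mem_erase.mp hx).2
  have hnonpos : ∑ x ∈ s.erase a, f x ≤ 0 := Finset.sum_nonpos hle'
  have hfa2 : f a = -2 ∨ f a = -1 := by omega
  rcases hfa2 with h2 | h1
  · left
    refine ⟨a, ha, h2, fun x hx hxa => ?_⟩
    have hzero : ∑ x ∈ s.erase a, f x = 0 := by omega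
    exact (Finset.sum_eq_zero_iff_of_nonpos hle').mp hzero x
      (Finset.mem_erase.mpr ⟨hxa, hx⟩)
  · right
    have hsum' : ∑ x ∈ s.erase a, f x = -1 := by omega
    obtain ⟨c, hc, hfc, hrest⟩ := sum_classify1 (s.erase a) f hle' hsum'
    obtain ⟨hca, hcs⟩ := Finset.mem_erase.mp hc
    refine ⟨a, ha, c, hcs, Ne.symm hca, h1, hfc, fun x hx hxa hxc => ?_⟩
    exact hrest x (Finset.mem_erase.mpr ⟨hxa, hx⟩) hxc

section Moves

variable {σ : Fin r → ℤ} (v : Fin r → (Fin r → ℤ))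
  (hv : IsObtuseSuperbase {x : Fin r → ℤ | dotInt σ x = 0} v)
  (S : Finset (Fin r))

/-- row sums of the Gram matrix of a superbase vanish -/
lemma row_sum_zero (hsum : (∑ i, v i) = 0) (j : Fin r) :
    ∑ i, dotInt (v i) (v j) = 0 := by
  rw [← dot_sum_left Finset.univ v (v j), hsum, dot_zero_left]

/-- dot of a subset-sum with `v k`, `k` in the subset -/
lemma dot_w_mem (hsum : (∑ i, v i) = 0) {k : Fin r} (hk : k ∈ S) :
    dotInt (∑ i ∈ S, v i) (v k) = -∑ j ∈ Sᶜ, dotInt (v k) (v j) := by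
  rw [dot_sum_left]
  have hsplit : ∑ i ∈ Sᶜ, dotInt (v i) (v k) + ∑ i ∈ S, dotInt (v i) (v k)
      = ∑ i, dotInt (v i) (v k) := Finset.sum_compl_add_sum S _
  rw [row_sum_zero v hsum k] at hsplit
  have hcomm : ∑ j ∈ Sᶜ, dotInt (v k) (v j) = ∑ i ∈ Sᶜ, dotInt (v i) (v k) :=
    Finset.sum_congr rfl fun j _ => dot_comm _ _
  omega

/-- dot of a subset-sum with `v k`, `k` outside the subset -/
lemma dot_w_notMem {k : Fin r} :
    dotInt (∑ i ∈ S, v i) (v k) = ∑ i ∈ S, dotInt (v i) (v k) := dot_sum_left _ _ _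

/-- total cross sum is minus the norm -/
lemma cross_total (hsum : (∑ i, v i) = 0) :
    ∑ k ∈ S, ∑ j ∈ Sᶜ, dotInt (v k) (v j) = - dotInt (∑ i ∈ S, v i) (∑ i ∈ S, v i) := by
  have h1 : dotInt (∑ i ∈ S, v i) (∑ i ∈ S, v i) = ∑ k ∈ S, dotInt (∑ i ∈ S, v i) (v k) :=
    dot_sum_right _ _ _
  rw [h1, ← Finset.sum_neg_distrib]
  exact (Finset.sum_congr rfl fun k hk => by rw [dot_w_mem v S hsum hk, neg_neg]).symm

end Moves



variable {r : ℕ}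

lemma moveA {σ : Fin r → ℤ} (v : Fin r → (Fin r → ℤ))
    (hv : IsObtuseSuperbase {x : Fin r → ℤ | dotInt σ x = 0} v)
    (S : Finset (Fin r)) {a b : Fin r} (ha : a ∈ S) (hb : b ∉ S)
    (hstruct : ∀ i ∈ S, i ≠ a → ∀ j, j ∉ S → dotInt (v i) (v j) = 0)
    (hw2 : dotInt (∑ i ∈ S, v i) (∑ i ∈ S, v i) = 2) :
    ∃ v' : Fin r → (Fin r → ℤ),
      IsObtuseSuperbase {x : Fin r → ℤ | dotInt σ x = 0} v' ∧
      v' a = ∑ i ∈ S, v i ∧ ∀ i, i ≠ a → i ≠ b → v' i = v i := by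
  classical
  obtain ⟨hmem, hspan, hobt, hsum⟩ := hv
  set w := ∑ i ∈ S, v i with hwdef
  have hab : a ≠ b := fun h => hb (h ▸ ha)
  have hwσ : dotInt σ w = 0 := by
    rw [hwdef, dot_sum_right]
    exact Finset.sum_eq_zero fun i _ => hmem i
  -- structural dot facts
  have FB : ∀ k ∈ S, k ≠ a → dotInt w (v k) = 0 := by
    intro k hk hka
    rw [hwdef, dot_w_mem v S hsum hk]
    have : ∑ j ∈ Sᶜ, dotInt (v k) (v j) = 0 :=
      Finset.sum_eq_zero fun j hj => hstruct k hk hka j (Finset.mem_compl.mp hj)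
    rw [this]; ring
  have hcrossa : ∑ j ∈ Sᶜ, dotInt (v a) (v j) = -2 := by
    have htot : ∑ k ∈ S, ∑ j ∈ Sᶜ, dotInt (v k) (v j) = -2 := by
      rw [cross_total v S hsum, ← hwdef, hw2]
    have hsingle : ∑ k ∈ S, ∑ j ∈ Sᶜ, dotInt (v k) (v j)
        = ∑ j ∈ Sᶜ, dotInt (v a) (v j) := by
      apply Finset.sum_eq_single_of_mem a ha
      intro k hk hka
      exact Finset.sum_eq_zero fun j hj => hstruct k hk hka j (Finset.mem_compl.mp hj)
    omega
  have FC : dotInt w (v a) = 2 := by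
    rw [hwdef, dot_w_mem v S hsum ha, hcrossa]; ring
  have FA : ∀ k, k ∉ S → dotInt w (v k) = dotInt (v a) (v k) := by
    intro k hk
    rw [hwdef, dot_w_notMem]
    apply Finset.sum_eq_single_of_mem a ha
    intro i hi hia
    exact hstruct i hi hia k hk
  -- the new superbase
  set v' := Function.update (Function.update v a w) b (v a + v b - w) with hv'def
  have hv'a : v' a = w := by
    rw [hv'def, Function.update_of_ne hab, Function.update_self]
  have hv'b : v' b = v a + v b - w := by
    rw [hv'def, Function.update_self]
  have hv'k : ∀ k, k ≠ a → k ≠ b → v' k = v k := by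
    intro k hka hkb
    rw [hv'def, Function.update_of_ne hkb, Function.update_of_ne hka]
  -- key dot bounds
  have keya : ∀ j, j ≠ a → j ≠ b → dotInt w (v j) ≤ 0 := by
    intro j hja hjb
    by_cases hjS : j ∈ S
    · rw [FB j hjS hja]
    · rw [FA j hjS]
      exact hobt a j (Ne.symm hja)
  have keyb : ∀ j, j ≠ a → j ≠ b → dotInt (v a + v b - w) (v j) ≤ 0 := by
    intro j hja hjb
    rw [dot_sub_left, dot_add_left, dot_comm w (v j)]
    by_cases hjS : j ∈ S
    · rw [dot_comm (v j) w]
      linarith [FB j hjS hja, hobt a j (Ne.symm hja), hobt b j (Ne.symm hjb)]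
    · rw [dot_comm (v j) w]
      linarith [FA j hjS, hobt b j (Ne.symm hjb)]
  have keyab : dotInt w (v a + v b - w) ≤ 0 := by
    rw [dot_sub_right, dot_add_right, hw2, FC]
    linarith [FA b hb, hobt a b hab]
  refine ⟨v', ⟨?_, ?_, ?_, ?_⟩, hv'a, hv'k⟩
  · -- membership
    intro i
    by_cases hia : i = a
    · subst hia; rw [hv'a]; exact hwσ
    · by_cases hib : i = b
      · rw [hib, hv'b]
        show dotInt σ (v a + v b - w) = 0
        rw [dot_sub_right, dot_add_right, hwσ]
        have h1 : dotInt σ (v a) = 0 := hmem a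
        have h2 : dotInt σ (v b) = 0 := hmem b
        omega
      · rw [hv'k i hia hib]; exact hmem i
  · -- spanning
    intro x hx
    have hva : v a ∈ Submodule.span ℤ (Set.range v') := by
      have hid : v a = v' a - ∑ i ∈ S.erase a, v' i := by
        have h1 : ∑ i ∈ S.erase a, v' i = ∑ i ∈ S.erase a, v i := by
          apply Finset.sum_congr rfl
          intro i hi
          obtain ⟨hia, hiS⟩ := Finset.mem_erase.mp hi
          exact hv'k i hia (fun h => hb (h ▸ hiS))
        have h2 : ∑ i ∈ S.erase a, v i + v a = w := Finset.sum_erase_add S v ha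
        rw [h1, hv'a]
        rw [← h2]; abel
      rw [hid]
      exact Submodule.sub_mem _ (Submodule.subset_span ⟨a, rfl⟩)
        (Submodule.sum_mem _ fun i _ => Submodule.subset_span ⟨i, rfl⟩)
    have hvb : v b ∈ Submodule.span ℤ (Set.range v') := by
      have hid : v b = v' b - v a + v' a := by
        rw [hv'b, hv'a]; abel
      rw [hid]
      exact Submodule.add_mem _
        (Submodule.sub_mem _ (Submodule.subset_span ⟨b, rfl⟩) hva)
        (Submodule.subset_span ⟨a, rfl⟩)
    have hall : Set.range v ⊆ ↑(Submodule.span ℤ (Set.range v')) := by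
      rintro _ ⟨i, rfl⟩
      by_cases hia : i = a
      · subst hia; exact hva
      · by_cases hib : i = b
        · subst hib; exact hvb
        · rw [← hv'k i hia hib]; exact Submodule.subset_span ⟨i, rfl⟩
    exact Submodule.span_le.mpr hall (hspan x hx)
  · -- obtuse
    intro i j hij
    by_cases hia : i = a
    · subst hia
      rw [hv'a]
      by_cases hjb : j = b
      · subst hjb; rw [hv'b]; exact keyab
      · rw [hv'k j (Ne.symm hij) hjb]; exact keya j (Ne.symm hij) hjb
    · by_cases hib : i = b
      · subst hib
        rw [hv'b]
        by_cases hja : j = a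
        · subst hja
          rw [hv'a, dot_comm]
          exact keyab
        · rw [hv'k j hja (Ne.symm hij)]
          exact keyb j hja (Ne.symm hij)
      · rw [hv'k i hia hib]
        by_cases hja : j = a
        · subst hja; rw [hv'a, dot_comm]; exact keya i hia hib
        · by_cases hjb : j = b
          · subst hjb; rw [hv'b, dot_comm]; exact keyb i hia hib
          · rw [hv'k j hja hjb]; exact hobt i j hij
  · -- sum zero
    have h1 : ∑ i, v' i = (v a + v b - w) + ∑ x ∈ Finset.univ \ {b}, Function.update v a w x := by
      rw [hv'def]
      exact Finset.sum_update_of_mem (Finset.mem_univ b) _ _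
    rw [Finset.sdiff_singleton_eq_erase] at h1
    have hamem : a ∈ Finset.univ.erase b := Finset.mem_erase.mpr ⟨hab, Finset.mem_univ a⟩
    have h2 : ∑ x ∈ Finset.univ.erase b, Function.update v a w x
        = w + ∑ x ∈ (Finset.univ.erase b) \ {a}, v x :=
      Finset.sum_update_of_mem hamem _ _
    rw [Finset.sdiff_singleton_eq_erase] at h2
    have h3 : ∑ x ∈ (Finset.univ.erase b).erase a, v x + v a = ∑ x ∈ Finset.univ.erase b, v x :=
      Finset.sum_erase_add _ v hamem
    have h4 : ∑ x ∈ Finset.univ.erase b, v x + v b = ∑ x, v x :=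
      Finset.sum_erase_add _ v (Finset.mem_univ b)
    rw [hsum] at h4
    rw [h1, h2]
    have e3 : ∑ x ∈ Finset.univ.erase b, v x = - v b := by
      calc ∑ x ∈ Finset.univ.erase b, v x
          = (∑ x ∈ Finset.univ.erase b, v x + v b) - v b := by abel
        _ = - v b := by rw [h4]; abel
    have h5 : ∑ x ∈ (Finset.univ.erase b).erase a, v x = - v a - v b := by
      calc ∑ x ∈ (Finset.univ.erase b).erase a, v x
          = (∑ x ∈ (Finset.univ.erase b).erase a, v x + v a) - v a := by abel
        _ = - v a - v b := by rw [h3, e3]; abel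
    rw [h5]; abel



variable {r : ℕ}

lemma moveB {σ : Fin r → ℤ} (v : Fin r → (Fin r → ℤ))
    (hv : IsObtuseSuperbase {x : Fin r → ℤ | dotInt σ x = 0} v)
    (S : Finset (Fin r)) {a c b d : Fin r} (ha : a ∈ S) (hc : c ∈ S) (hac : a ≠ c)
    (hb : b ∉ S) (hd : d ∉ S)
    (hgab : dotInt (v a) (v b) = -1) (hgcd : dotInt (v c) (v d) = -1)
    (hz : ∀ i ∈ S, ∀ j, j ∉ S → ¬(i = a ∧ j = b) → ¬(i = c ∧ j = d) →
      dotInt (v i) (v j) = 0) :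
    ∃ v' : Fin r → (Fin r → ℤ),
      IsObtuseSuperbase {x : Fin r → ℤ | dotInt σ x = 0} v' ∧
      v' a = ∑ i ∈ S, v i ∧ ∀ i, i ≠ a → i ≠ c → i ≠ d → v' i = v i := by
  classical
  obtain ⟨hmem, hspan, hobt, hsum⟩ := hv
  set w := ∑ i ∈ S, v i with hwdef
  have had : a ≠ d := fun h => hd (h ▸ ha)
  have hcd : c ≠ d := fun h => hd (h ▸ hc)
  have hab' : a ≠ b := fun h => hb (h ▸ ha)
  have hcb : c ≠ b := fun h => hb (h ▸ hc)
  have hwσ : dotInt σ w = 0 := by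
    rw [hwdef, dot_sum_right]
    exact Finset.sum_eq_zero fun i _ => hmem i
  -- row sums
  have hrowa : ∑ j ∈ Sᶜ, dotInt (v a) (v j) = -1 := by
    rw [Finset.sum_eq_single_of_mem b (Finset.mem_compl.mpr hb)]
    · exact hgab
    · intro j hj hjb
      exact hz a ha j (Finset.mem_compl.mp hj) (fun h => hjb h.2) (fun h => hac h.1)
  have hrowc : ∑ j ∈ Sᶜ, dotInt (v c) (v j) = -1 := by
    rw [Finset.sum_eq_single_of_mem d (Finset.mem_compl.mpr hd)]
    · exact hgcd
    · intro j hj hjd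
      exact hz c hc j (Finset.mem_compl.mp hj) (fun h => hac (h.1.symm)) (fun h => hjd h.2)
  have hrowk : ∀ k ∈ S, k ≠ a → k ≠ c → ∑ j ∈ Sᶜ, dotInt (v k) (v j) = 0 := by
    intro k hk hka hkc
    exact Finset.sum_eq_zero fun j hj =>
      hz k hk j (Finset.mem_compl.mp hj) (fun h => hka h.1) (fun h => hkc h.1)
  -- norm of w is automatically 2 given the structure
  have hw2 : dotInt w w = 2 := by
    have htot := cross_total v S hsum
    have hsum2 : ∑ k ∈ S, ∑ j ∈ Sᶜ, dotInt (v k) (v j) = -2 := by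
      rw [Finset.sum_eq_add_of_mem a c ha hc hac
        (fun k hk hne => hrowk k hk hne.1 hne.2)]
      rw [hrowa, hrowc]; norm_num
    rw [← hwdef] at htot
    omega
  -- dot facts
  have FCa : dotInt w (v a) = 1 := by
    rw [hwdef, dot_w_mem v S hsum ha, hrowa]; ring
  have FCc : dotInt w (v c) = 1 := by
    rw [hwdef, dot_w_mem v S hsum hc, hrowc]; ring
  have FB' : ∀ k ∈ S, k ≠ a → k ≠ c → dotInt w (v k) = 0 := by
    intro k hk hka hkc
    rw [hwdef, dot_w_mem v S hsum hk, hrowk k hk hka hkc]; ring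
  have FA' : ∀ k, k ∉ S → dotInt w (v k) = dotInt (v a) (v k) + dotInt (v c) (v k) := by
    intro k hk
    rw [hwdef, dot_w_notMem]
    rw [Finset.sum_eq_add_of_mem a c ha hc hac
      (fun i hi hne => hz i hi k hk (fun h => hne.1 h.1) (fun h => hne.2 h.1))]
  have hgadk : dotInt (v a) (v d) ≤ 0 := hobt a d had
  have FAd : dotInt w (v d) = dotInt (v a) (v d) - 1 := by
    rw [FA' d hd, hgcd]; ring
  -- the new superbase
  set v' := Function.update (Function.update (Function.update v a w) c (v a - w)) d
    (v c + v d) with hv'def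
  have hv'a : v' a = w := by
    rw [hv'def, Function.update_of_ne had, Function.update_of_ne hac, Function.update_self]
  have hv'c : v' c = v a - w := by
    rw [hv'def, Function.update_of_ne hcd, Function.update_self]
  have hv'd : v' d = v c + v d := by
    rw [hv'def, Function.update_self]
  have hv'k : ∀ k, k ≠ a → k ≠ c → k ≠ d → v' k = v k := by
    intro k hka hkc hkd
    rw [hv'def, Function.update_of_ne hkd, Function.update_of_ne hkc,
      Function.update_of_ne hka]
  -- key bounds
  have K1 : ∀ k, k ≠ a → k ≠ c → k ≠ d → dotInt w (v k) ≤ 0 := by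
    intro k hka hkc hkd
    by_cases hkS : k ∈ S
    · rw [FB' k hkS hka hkc]
    · rw [FA' k hkS]
      linarith [hobt a k (Ne.symm hka), hobt c k (Ne.symm hkc)]
  have K2 : dotInt w (v a - w) ≤ 0 := by
    rw [dot_sub_right, FCa, hw2]; norm_num
  have K3 : dotInt w (v c + v d) ≤ 0 := by
    rw [dot_add_right, FCc, FAd]
    linarith
  have K4 : ∀ k, k ≠ a → k ≠ c → k ≠ d → dotInt (v a - w) (v k) ≤ 0 := by
    intro k hka hkc hkd
    rw [dot_sub_left, dot_comm w (v k), dot_comm (v k) w]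
    by_cases hkS : k ∈ S
    · rw [FB' k hkS hka hkc]
      linarith [hobt a k (Ne.symm hka)]
    · rw [FA' k hkS]
      have hgck : dotInt (v c) (v k) = 0 :=
        hz c hc k hkS (fun h => hac h.1.symm) (fun h => hkd h.2)
      rw [hgck]
      linarith
  have K5 : dotInt (v a - w) (v c + v d) ≤ 0 := by
    rw [dot_sub_left, dot_add_right, dot_add_right, FCc, FAd]
    have : dotInt (v a) (v c) ≤ 0 := hobt a c hac
    linarith
  have K6 : ∀ k, k ≠ a → k ≠ c → k ≠ d → dotInt (v c + v d) (v k) ≤ 0 := by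
    intro k hka hkc hkd
    rw [dot_add_left]
    linarith [hobt c k (Ne.symm hkc), hobt d k (Ne.symm hkd)]
  refine ⟨v', ⟨?_, ?_, ?_, ?_⟩, hv'a, hv'k⟩
  · -- membership
    intro i
    by_cases hia : i = a
    · rw [hia, hv'a]; exact hwσ
    · by_cases hic : i = c
      · rw [hic, hv'c]
        show dotInt σ (v a - w) = 0
        have h1 : dotInt σ (v a) = 0 := hmem a
        rw [dot_sub_right, hwσ]
        omega
      · by_cases hid : i = d
        · rw [hid, hv'd]
          show dotInt σ (v c + v d) = 0
          have h1 : dotInt σ (v c) = 0 := hmem c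
          have h2 : dotInt σ (v d) = 0 := hmem d
          rw [dot_add_right]
          omega
        · rw [hv'k i hia hic hid]; exact hmem i
  · -- spanning
    intro x hx
    have hva : v a ∈ Submodule.span ℤ (Set.range v') := by
      have hid : v a = v' a + v' c := by rw [hv'a, hv'c]; abel
      rw [hid]
      exact Submodule.add_mem _ (Submodule.subset_span ⟨a, rfl⟩)
        (Submodule.subset_span ⟨c, rfl⟩)
    have hvc : v c ∈ Submodule.span ℤ (Set.range v') := by
      have hce : c ∈ S.erase a := Finset.mem_erase.mpr ⟨Ne.symm hac, hc⟩
      have h1 : ∑ i ∈ S.erase a, v i + v a = w := Finset.sum_erase_add S v ha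
      have h2 : ∑ i ∈ (S.erase a).erase c, v i + v c = ∑ i ∈ S.erase a, v i :=
        Finset.sum_erase_add _ v hce
      have h3 : ∑ i ∈ (S.erase a).erase c, v i = ∑ i ∈ (S.erase a).erase c, v' i := by
        apply Finset.sum_congr rfl
        intro i hi
        obtain ⟨hic, hi2⟩ := Finset.mem_erase.mp hi
        obtain ⟨hia, hiS⟩ := Finset.mem_erase.mp hi2
        exact (hv'k i hia hic (fun h => hd (h ▸ hiS))).symm
      have hid : v c = - v' c - ∑ i ∈ (S.erase a).erase c, v' i := by
        rw [hv'c, ← h3]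
        have : v a - w = - (∑ i ∈ (S.erase a).erase c, v i + v c) := by
          rw [h2]
          rw [show ∑ i ∈ S.erase a, v i = w - v a by rw [← h1]; abel]
          abel
        rw [this]; abel
      rw [hid]
      exact Submodule.sub_mem _
        (Submodule.neg_mem _ (Submodule.subset_span ⟨c, rfl⟩))
        (Submodule.sum_mem _ fun i _ => Submodule.subset_span ⟨i, rfl⟩)
    have hvd : v d ∈ Submodule.span ℤ (Set.range v') := by
      have hid : v d = v' d - v c := by rw [hv'd]; abel
      rw [hid]
      exact Submodule.sub_mem _ (Submodule.subset_span ⟨d, rfl⟩) hvc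
    have hall : Set.range v ⊆ ↑(Submodule.span ℤ (Set.range v')) := by
      rintro _ ⟨i, rfl⟩
      by_cases hia : i = a
      · rw [hia]; exact hva
      · by_cases hic : i = c
        · rw [hic]; exact hvc
        · by_cases hid : i = d
          · rw [hid]; exact hvd
          · rw [← hv'k i hia hic hid]; exact Submodule.subset_span ⟨i, rfl⟩
    exact Submodule.span_le.mpr hall (hspan x hx)
  · -- obtuse
    intro i j hij
    by_cases hia : i = a
    · subst hia
      rw [hv'a]
      by_cases hjc : j = c
      · rw [hjc, hv'c]; exact K2
      · by_cases hjd : j = d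
        · rw [hjd, hv'd]; exact K3
        · rw [hv'k j (Ne.symm hij) hjc hjd]; exact K1 j (Ne.symm hij) hjc hjd
    · by_cases hic : i = c
      · subst hic
        rw [hv'c]
        by_cases hja : j = a
        · rw [hja, hv'a, dot_comm]; exact K2
        · by_cases hjd : j = d
          · rw [hjd, hv'd]; exact K5
          · rw [hv'k j hja (Ne.symm hij) hjd]; exact K4 j hja (Ne.symm hij) hjd
      · by_cases hid : i = d
        · subst hid
          rw [hv'd]
          by_cases hja : j = a
          · rw [hja, hv'a, dot_comm]; exact K3
          · by_cases hjc : j = c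
            · rw [hjc, hv'c, dot_comm]; exact K5
            · rw [hv'k j hja hjc (Ne.symm hij)]; exact K6 j hja hjc (Ne.symm hij)
        · rw [hv'k i hia hic hid]
          by_cases hja : j = a
          · rw [hja, hv'a, dot_comm]; exact K1 i hia hic hid
          · by_cases hjc : j = c
            · rw [hjc, hv'c, dot_comm]; exact K4 i hia hic hid
            · by_cases hjd : j = d
              · rw [hjd, hv'd, dot_comm]; exact K6 i hia hic hid
              · rw [hv'k j hja hjc hjd]; exact hobt i j hij
  · -- sum zero
    have h1 : ∑ i, v' i = (v c + v d)
        + ∑ x ∈ Finset.univ \ {d}, Function.update (Function.update v a w) c (v a - w) x := by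
      rw [hv'def]
      exact Finset.sum_update_of_mem (Finset.mem_univ d) _ _
    rw [Finset.sdiff_singleton_eq_erase] at h1
    have hcmem : c ∈ Finset.univ.erase d := Finset.mem_erase.mpr ⟨hcd, Finset.mem_univ c⟩
    have h2 : ∑ x ∈ Finset.univ.erase d, Function.update (Function.update v a w) c (v a - w) x
        = (v a - w) + ∑ x ∈ (Finset.univ.erase d) \ {c}, Function.update v a w x :=
      Finset.sum_update_of_mem hcmem _ _
    rw [Finset.sdiff_singleton_eq_erase] at h2
    have hamem : a ∈ (Finset.univ.erase d).erase c :=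
      Finset.mem_erase.mpr ⟨hac, Finset.mem_erase.mpr ⟨had, Finset.mem_univ a⟩⟩
    have h3 : ∑ x ∈ (Finset.univ.erase d).erase c, Function.update v a w x
        = w + ∑ x ∈ ((Finset.univ.erase d).erase c) \ {a}, v x :=
      Finset.sum_update_of_mem hamem _ _
    rw [Finset.sdiff_singleton_eq_erase] at h3
    have e1 : ∑ x ∈ Finset.univ.erase d, v x = - v d := by
      have h4 : ∑ x ∈ Finset.univ.erase d, v x + v d = ∑ x, v x :=
        Finset.sum_erase_add _ v (Finset.mem_univ d)
      rw [hsum] at h4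
      calc ∑ x ∈ Finset.univ.erase d, v x
          = (∑ x ∈ Finset.univ.erase d, v x + v d) - v d := by abel
        _ = - v d := by rw [h4]; abel
    have e2 : ∑ x ∈ (Finset.univ.erase d).erase c, v x = - v c - v d := by
      have h4 : ∑ x ∈ (Finset.univ.erase d).erase c, v x + v c
          = ∑ x ∈ Finset.univ.erase d, v x := Finset.sum_erase_add _ v hcmem
      calc ∑ x ∈ (Finset.univ.erase d).erase c, v x
          = (∑ x ∈ (Finset.univ.erase d).erase c, v x + v c) - v c := by abel
        _ = - v c - v d := by rw [h4, e1]; abel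
    have e3 : ∑ x ∈ ((Finset.univ.erase d).erase c).erase a, v x = - v a - v c - v d := by
      have h4 : ∑ x ∈ ((Finset.univ.erase d).erase c).erase a, v x + v a
          = ∑ x ∈ (Finset.univ.erase d).erase c, v x := Finset.sum_erase_add _ v hamem
      calc ∑ x ∈ ((Finset.univ.erase d).erase c).erase a, v x
          = (∑ x ∈ ((Finset.univ.erase d).erase c).erase a, v x + v a) - v a := by abel
        _ = - v a - v c - v d := by rw [h4, e2]; abel
    rw [h1, h2, h3, e3]
    abel



variable {r : ℕ}

lemma install {σ : Fin r → ℤ} (hr : 0 < r) (hcm : IsChangemaker σ)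
    (v : Fin r → (Fin r → ℤ))
    (hv : IsObtuseSuperbase {x : Fin r → ℤ | dotInt σ x = 0} v)
    {w : Fin r → ℤ} (hwL : dotInt σ w = 0) (hw2 : dotInt w w = 2)
    (Q : (Fin r → ℤ) → Prop)
    (h1 : ∀ i, Q (v i) → -1 ≤ dotInt w (v i) ∧ dotInt w (v i) ≤ 0)
    (h2 : ∀ i j, Q (v i) → Q (v j) → dotInt w (v i) = -1 → dotInt w (v j) = -1 → i = j) :
    ∃ v' : Fin r → (Fin r → ℤ),
      IsObtuseSuperbase {x : Fin r → ℤ | dotInt σ x = 0} v' ∧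
      (∃ i, v' i = w) ∧ (∀ i, Q (v i) → ∃ j, v' j = v i) := by
  classical
  obtain ⟨hmem, hspan, hobt, hsum⟩ := hv
  obtain ⟨S, hS⟩ := subset_rep hr v hobt hsum (fun i => hmem i) hcm (hspan w hwL) hw2
  have hw2' : dotInt (∑ i ∈ S, v i) (∑ i ∈ S, v i) = 2 := by rw [← hS]; exact hw2
  have hvfull : IsObtuseSuperbase {x : Fin r → ℤ | dotInt σ x = 0} v :=
    ⟨hmem, hspan, hobt, hsum⟩
  -- cross rows
  set row : Fin r → ℤ := fun k => ∑ j ∈ Sᶜ, dotInt (v k) (v j) with hrow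
  have hrow_nonpos : ∀ k ∈ S, row k ≤ 0 := by
    intro k hk
    exact Finset.sum_nonpos fun j hj =>
      hobt k j (fun h => (Finset.mem_compl.mp hj) (h ▸ hk))
  have hterm_nonpos : ∀ k ∈ S, ∀ j ∈ Sᶜ, dotInt (v k) (v j) ≤ 0 := by
    intro k hk j hj
    exact hobt k j (fun h => (Finset.mem_compl.mp hj) (h ▸ hk))
  have htot : ∑ k ∈ S, row k = -2 := by
    rw [hrow]
    rw [cross_total v S hsum, hw2']
  -- dot of w with members
  have hdmem : ∀ k ∈ S, dotInt w (v k) = - row k := by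
    intro k hk
    rw [hS, dot_w_mem v S hsum hk]
  have hdnot : ∀ k, k ∉ S → dotInt w (v k) = ∑ i ∈ S, dotInt (v i) (v k) := by
    intro k hk
    rw [hS, dot_w_notMem]
  rcases sum_classify2 S row hrow_nonpos htot with ⟨a, ha, hra, hothers⟩ |
    ⟨a, ha, c, hc, hac, hra, hrc, hothers⟩
  · -- CASE A : all cross terms from row a
    have hstruct : ∀ i ∈ S, i ≠ a → ∀ j, j ∉ S → dotInt (v i) (v j) = 0 := by
      intro i hi hia j hj
      have hz : row i = 0 := hothers i hi hia
      exact (Finset.sum_eq_zero_iff_of_nonpos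
        (fun j' hj' => hterm_nonpos i hi j' hj')).mp hz j (Finset.mem_compl.mpr hj)
    have hdota : dotInt w (v a) = 2 := by rw [hdmem a ha, hra]; norm_num
    have hiQa : ∀ i, Q (v i) → i ≠ a := by
      intro i hQ hia
      have := (h1 i hQ).2
      rw [hia, hdota] at this
      omega
    -- dot w with outside vectors equals the a-row entry
    have hdout : ∀ j, j ∉ S → dotInt w (v j) = dotInt (v a) (v j) := by
      intro j hj
      rw [hdnot j hj]
      exact Finset.sum_eq_single_of_mem a ha (fun i hi hia => hstruct i hi hia j hj)
    -- find b ∉ S with ¬ Q (v b)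
    have hrowa2 : ∑ j ∈ Sᶜ, dotInt (v a) (v j) = -2 := hra
    have hbex : ∃ b, b ∉ S ∧ ¬ Q (v b) := by
      rcases sum_classify2 Sᶜ (fun j => dotInt (v a) (v j))
        (fun j hj => hterm_nonpos a ha j hj) hrowa2 with ⟨b, hbc, hgb2, _⟩ |
        ⟨b, hbc, d, hdc, hbd, hgb1, hgd1, _⟩
      · refine ⟨b, Finset.mem_compl.mp hbc, fun hQ => ?_⟩
        have := (h1 b hQ).1
        rw [hdout b (Finset.mem_compl.mp hbc), hgb2] at this
        omega
      · by_cases hQb : Q (v b)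
        · refine ⟨d, Finset.mem_compl.mp hdc, fun hQd => ?_⟩
          have e1 : dotInt w (v b) = -1 := by
            rw [hdout b (Finset.mem_compl.mp hbc)]; exact hgb1
          have e2 : dotInt w (v d) = -1 := by
            rw [hdout d (Finset.mem_compl.mp hdc)]; exact hgd1
          exact hbd (h2 b d hQb hQd e1 e2)
        · exact ⟨b, Finset.mem_compl.mp hbc, hQb⟩
    obtain ⟨b, hbS, hQb⟩ := hbex
    obtain ⟨v', hv', hv'a, hv'k⟩ := moveA v hvfull S ha hbS hstruct hw2'
    refine ⟨v', hv', ⟨a, by rw [hv'a, hS]⟩, fun i hQ => ?_⟩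
    have hia : i ≠ a := hiQa i hQ
    have hib : i ≠ b := fun h => hQb (h ▸ hQ)
    exact ⟨i, by rw [hv'k i hia hib]⟩
  · -- CASE B : two rows a ≠ c each -1
    have hstructk : ∀ i ∈ S, i ≠ a → i ≠ c → ∀ j, j ∉ S → dotInt (v i) (v j) = 0 := by
      intro i hi hia hic j hj
      have hz : row i = 0 := hothers i hi hia hic
      exact (Finset.sum_eq_zero_iff_of_nonpos
        (fun j' hj' => hterm_nonpos i hi j' hj')).mp hz j (Finset.mem_compl.mpr hj)
    obtain ⟨b, hbc, hgab, hrowa0⟩ := sum_classify1 Sᶜ (fun j => dotInt (v a) (v j))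
      (fun j hj => hterm_nonpos a ha j hj) hra
    obtain ⟨d, hdc, hgcd, hrowc0⟩ := sum_classify1 Sᶜ (fun j => dotInt (v c) (v j))
      (fun j hj => hterm_nonpos c hc j hj) hrc
    have hbS : b ∉ S := Finset.mem_compl.mp hbc
    have hdS : d ∉ S := Finset.mem_compl.mp hdc
    have hz : ∀ i ∈ S, ∀ j, j ∉ S → ¬(i = a ∧ j = b) → ¬(i = c ∧ j = d) →
        dotInt (v i) (v j) = 0 := by
      intro i hi j hj hne1 hne2
      by_cases hia : i = a
      · subst hia
        have hjb : j ≠ b := fun h => hne1 ⟨rfl, h⟩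
        exact hrowa0 j (Finset.mem_compl.mpr hj) hjb
      · by_cases hic : i = c
        · subst hic
          have hjd : j ≠ d := fun h => hne2 ⟨rfl, h⟩
          exact hrowc0 j (Finset.mem_compl.mpr hj) hjd
        · exact hstructk i hi hia hic j hj
    have hdota : dotInt w (v a) = 1 := by rw [hdmem a ha, hra]; norm_num
    have hdotc : dotInt w (v c) = 1 := by rw [hdmem c hc, hrc]; norm_num
    have hiQa : ∀ i, Q (v i) → i ≠ a := by
      intro i hQ hia
      have := (h1 i hQ).2
      rw [hia, hdota] at this; omega
    have hiQc : ∀ i, Q (v i) → i ≠ c := by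
      intro i hQ hic
      have := (h1 i hQ).2
      rw [hic, hdotc] at this; omega
    have hdout : ∀ j, j ∉ S → dotInt w (v j) = dotInt (v a) (v j) + dotInt (v c) (v j) := by
      intro j hj
      rw [hdnot j hj]
      exact Finset.sum_eq_add_of_mem a c ha hc hac
        (fun i hi hne => hz i hi j hj (fun h => hne.1 h.1) (fun h => hne.2 h.1))
    by_cases hQd : Q (v d)
    · -- use the mirrored move (replace b instead of d)
      have hQb : ¬ Q (v b) := by
        intro hQb
        have e1 : -1 ≤ dotInt w (v b) := (h1 b hQb).1
        have e2 : -1 ≤ dotInt w (v d) := (h1 d hQd).1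
        have f1 : dotInt w (v b) = -1 + dotInt (v c) (v b) := by
          rw [hdout b hbS, hgab]
        have f2 : dotInt w (v d) = dotInt (v a) (v d) - 1 := by
          rw [hdout d hdS, hgcd]; ring
        have g1 : dotInt (v c) (v b) ≤ 0 :=
          hterm_nonpos c hc b hbc
        have g2 : dotInt (v a) (v d) ≤ 0 :=
          hterm_nonpos a ha d hdc
        have e1' : dotInt w (v b) = -1 := by omega
        have e2' : dotInt w (v d) = -1 := by omega
        have hbd : b = d := h2 b d hQb hQd e1' e2'
        have : dotInt (v c) (v b) = -1 := by rw [hbd]; exact hgcd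
        omega
      have hz' : ∀ i ∈ S, ∀ j, j ∉ S → ¬(i = c ∧ j = d) → ¬(i = a ∧ j = b) →
          dotInt (v i) (v j) = 0 := fun i hi j hj p q => hz i hi j hj q p
      obtain ⟨v', hv', hv'c, hv'k⟩ := moveB v hvfull S hc ha (Ne.symm hac) hdS hbS hgcd hgab hz'
      refine ⟨v', hv', ⟨c, by rw [hv'c, hS]⟩, fun i hQ => ?_⟩
      exact ⟨i, by rw [hv'k i (hiQc i hQ) (hiQa i hQ) (fun h => hQb (h ▸ hQ))]⟩
    · obtain ⟨v', hv', hv'a, hv'k⟩ := moveB v hvfull S ha hc hac hbS hdS hgab hgcd hz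
      refine ⟨v', hv', ⟨a, by rw [hv'a, hS]⟩, fun i hQ => ?_⟩
      exact ⟨i, by rw [hv'k i (hiQa i hQ) (hiQc i hQ) (fun h => hQd (h ▸ hQ))]⟩



variable {r : ℕ}

/-- the standard norm-two vector `e_{k-1} - e_k` -/
def zv (k : Fin r) : Fin r → ℤ :=
  Pi.single (⟨k.val - 1, lt_of_le_of_lt (Nat.sub_le _ _) k.isLt⟩ : Fin r) (1 : ℤ)
    - Pi.single k (1 : ℤ)

lemma dot_single_right (x : Fin r → ℤ) (i : Fin r) :
    dotInt x (Pi.single i (1:ℤ)) = x i := by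
  unfold dotInt
  rw [Finset.sum_eq_single i]
  · rw [Pi.single_eq_same]; ring
  · intro j _ hj
    rw [Pi.single_eq_of_ne hj]; ring
  · intro h; exact absurd (Finset.mem_univ i) h

lemma dot_zv_right (x : Fin r → ℤ) (k : Fin r) :
    dotInt x (zv k) = x ⟨k.val - 1, lt_of_le_of_lt (Nat.sub_le _ _) k.isLt⟩ - x k := by
  unfold zv
  rw [dot_sub_right, dot_single_right, dot_single_right]

lemma zv_apply (k j : Fin r) :
    zv k j = (if j.val = k.val - 1 then 1 else 0) - (if j = k then 1 else 0) := by
  unfold zv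
  have h1 : ((Pi.single (⟨k.val - 1, lt_of_le_of_lt (Nat.sub_le _ _) k.isLt⟩ : Fin r)
      (1:ℤ) : Fin r → ℤ)) j = if j.val = k.val - 1 then 1 else 0 := by
    by_cases h : j.val = k.val - 1
    · rw [if_pos h]
      have : j = (⟨k.val - 1, lt_of_le_of_lt (Nat.sub_le _ _) k.isLt⟩ : Fin r) :=
        Fin.ext h
      rw [this, Pi.single_eq_same]
    · rw [if_neg h, Pi.single_eq_of_ne (by simp [Fin.ext_iff]; omega)]
  have h2 : ((Pi.single k (1:ℤ) : Fin r → ℤ)) j = if j = k then 1 else 0 := by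
    by_cases h : j = k
    · rw [if_pos h, h, Pi.single_eq_same]
    · rw [if_neg h, Pi.single_eq_of_ne h]
  simp only [Pi.sub_apply, h1, h2]

lemma zv_sigma {σ : Fin r → ℤ} (k : Fin r)
    (h : σ ⟨k.val - 1, lt_of_le_of_lt (Nat.sub_le _ _) k.isLt⟩ = σ k) :
    dotInt σ (zv k) = 0 := by
  rw [dot_zv_right, h]; ring

lemma zv_norm (k : Fin r) (hk : 0 < k.val) : dotInt (zv k) (zv k) = 2 := by
  rw [dot_zv_right, zv_apply, zv_apply]
  have hne : (⟨k.val - 1, lt_of_le_of_lt (Nat.sub_le _ _) k.isLt⟩ : Fin r) ≠ k := by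
    simp [Fin.ext_iff]; omega
  rw [if_pos rfl, if_neg hne, if_neg (by omega : ¬ k.val = k.val - 1), if_pos rfl]
  ring

lemma zv_dot_lt (k k' : Fin r) (hk : 0 < k.val) (hk' : 0 < k'.val) (hlt : k'.val < k.val) :
    dotInt (zv k) (zv k') = if k'.val = k.val - 1 then -1 else 0 := by
  rw [dot_zv_right, zv_apply, zv_apply]
  rw [if_neg (by omega : ¬ (k'.val - 1) = k.val - 1),
    if_neg (by simp [Fin.ext_iff]; omega : ¬ (⟨k'.val - 1, _⟩ : Fin r) = k),
    if_neg (by simp [Fin.ext_iff]; omega : ¬ k' = k)]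
  by_cases h : k'.val = k.val - 1
  · rw [if_pos h, if_pos h]; ring
  · rw [if_neg h, if_neg h]; ring



end CM

theorem obtuse_superbase_with_standard_norm_twos
    (r : ℕ) (hr : 0 < r) (σ : Fin r → ℤ) (hcm : IsChangemaker σ)
    (hlast : ∀ i : Fin r, i.val = r - 1 → 2 ≤ σ i)
    (hex : ∃ v : Fin r → (Fin r → ℤ),
      IsObtuseSuperbase {x : Fin r → ℤ | dotInt σ x = 0} v) :
    ∃ v : Fin r → (Fin r → ℤ),
      IsObtuseSuperbase {x : Fin r → ℤ | dotInt σ x = 0} v ∧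
      ∀ k : Fin r, 0 < k.val →
        σ ⟨k.val - 1, lt_of_le_of_lt (Nat.sub_le _ _) k.isLt⟩ = σ k →
        ∃ i : Fin r,
          v i = Pi.single (⟨k.val - 1, lt_of_le_of_lt (Nat.sub_le _ _) k.isLt⟩ : Fin r)
                  (1 : ℤ) - Pi.single k (1 : ℤ) := by
  classical
  obtain ⟨v0, hv0⟩ := hex
  have main : ∀ m : ℕ, ∃ v : Fin r → (Fin r → ℤ),
      IsObtuseSuperbase {x : Fin r → ℤ | dotInt σ x = 0} v ∧
      ∀ k : Fin r, 0 < k.val → k.val ≤ m →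
        σ ⟨k.val - 1, lt_of_le_of_lt (Nat.sub_le _ _) k.isLt⟩ = σ k →
        ∃ i : Fin r, v i = CM.zv k := by
    intro m
    induction m with
    | zero => exact ⟨v0, hv0, fun k hk hk0 _ => absurd hk0 (by omega)⟩
    | succ m ih =>
        obtain ⟨v, hv, hprev⟩ := ih
        by_cases hm : ∃ k : Fin r, k.val = m + 1 ∧
            σ ⟨k.val - 1, lt_of_le_of_lt (Nat.sub_le _ _) k.isLt⟩ = σ k
        · obtain ⟨k, hkval, hkσ⟩ := hm
          have hkpos : 0 < k.val := by omega
          by_cases hin : ∃ i, v i = CM.zv k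
          · refine ⟨v, hv, fun k' hk' hk'le hk'σ => ?_⟩
            by_cases hle : k'.val ≤ m
            · exact hprev k' hk' hle hk'σ
            · have : k' = k := Fin.ext (by omega)
              rw [this]; exact hin
          · -- install zv k via the move lemma
            set Q : (Fin r → ℤ) → Prop := fun x => ∃ k' : Fin r, 0 < k'.val ∧ k'.val ≤ m ∧
              σ ⟨k'.val - 1, lt_of_le_of_lt (Nat.sub_le _ _) k'.isLt⟩ = σ k' ∧
              x = CM.zv k' with hQdef
            have hdotQ : ∀ k' : Fin r, 0 < k'.val → k'.val ≤ m →
                dotInt (CM.zv k) (CM.zv k') = if k'.val = k.val - 1 then -1 else 0 :=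
              fun k' h1' h2' => CM.zv_dot_lt k k' hkpos h1' (by omega)
            have h1 : ∀ i, Q (v i) → -1 ≤ dotInt (CM.zv k) (v i) ∧
                dotInt (CM.zv k) (v i) ≤ 0 := by
              intro i hQ
              obtain ⟨k', hp, hle, _, hx⟩ := hQ
              rw [hx, hdotQ k' hp hle]
              by_cases h : k'.val = k.val - 1
              · rw [if_pos h]; omega
              · rw [if_neg h]; omega
            have h2 : ∀ i j, Q (v i) → Q (v j) → dotInt (CM.zv k) (v i) = -1 →
                dotInt (CM.zv k) (v j) = -1 → i = j := by
              intro i j hQi hQj hdi hdj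
              obtain ⟨k1, hp1, hle1, _, hx1⟩ := hQi
              obtain ⟨k2, hp2, hle2, _, hx2⟩ := hQj
              rw [hx1, hdotQ k1 hp1 hle1] at hdi
              rw [hx2, hdotQ k2 hp2 hle2] at hdj
              have e1 : k1.val = k.val - 1 := by
                by_contra h; rw [if_neg h] at hdi; omega
              have e2 : k2.val = k.val - 1 := by
                by_contra h; rw [if_neg h] at hdj; omega
              have hk12 : k1 = k2 := Fin.ext (by omega)
              have hvij : v i = v j := by rw [hx1, hx2, hk12]
              by_contra hij
              have hobt := hv.2.2.1 i j hij
              rw [hvij, hx2] at hobt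
              rw [CM.zv_norm k2 hp2] at hobt
              omega
            have hwL : dotInt σ (CM.zv k) = 0 := CM.zv_sigma k hkσ
            have hw2 : dotInt (CM.zv k) (CM.zv k) = 2 := CM.zv_norm k hkpos
            obtain ⟨v', hv', hwin, hpres⟩ :=
              CM.install hr hcm v hv hwL hw2 Q h1 h2
            refine ⟨v', hv', fun k' hk' hk'le hk'σ => ?_⟩
            by_cases hle : k'.val ≤ m
            · obtain ⟨i, hi⟩ := hprev k' hk' hle hk'σ
              have hQi : Q (v i) := ⟨k', hk', hle, hk'σ, hi⟩
              obtain ⟨j, hj⟩ := hpres i hQi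
              exact ⟨j, by rw [hj, hi]⟩
            · have : k' = k := Fin.ext (by omega)
              rw [this]; exact hwin
        · refine ⟨v, hv, fun k' hk' hk'le hk'σ => ?_⟩
          by_cases hle : k'.val ≤ m
          · exact hprev k' hk' hle hk'σ
          · exact absurd ⟨k', by omega, hk'σ⟩ hm
  obtain ⟨v, hv, hcov⟩ := main r
  exact ⟨v, hv, fun k hk hσ => hcov k hk (le_of_lt k.isLt) hσ⟩
end

section
/- Let σ = (σ_1, …, σ_r) ∈ ℤ^r be a very slack changemaker vector and let m be the minimal index with σ_m > 1. Then for every index k with σ_k > 1 there exists a subset A ⊆ {1, …, k−1} such that σ_k = Σ_{i∈A} σ_i and 1 ≤ |A ∩ {1, …, m−1}| ≤ m − 2. -/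
/-!
In the 1-based indexing of the statement, `σ_1 = ⋯ = σ_{m-1} = 1`, and very slackness says that
each large coefficient `σ_a` (`a ≥ m`) is at most `(m - 3) + 1` plus the sum of the large
coefficients before it. Under this condition the greedy algorithm (use the largest coefficient
that still fits) writes every `n ∈ [0, m - 3 + Σ]` as a sum of large coefficients up to an error
in `[0, m - 3]`. For `n = σ_k - 1 ≤ σ_1 + ⋯ + σ_{k-1} - 2` this leaves a remainder between `1`
and `m - 2`, which is paid with that many of the ones.
-/

theorem exists_subset_sum_le_le_add {ι : Type*} [LinearOrder ι] (w : ι → ℤ) (M : ℤ)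
    (S : Finset ι) (hS : ∀ a ∈ S, w a ≤ M + 1 + ∑ x ∈ S with x < a, w x) {n : ℤ}
    (hn₀ : 0 ≤ n) (hn : n ≤ M + ∑ x ∈ S, w x) :
    ∃ B ⊆ S, ∑ x ∈ B, w x ≤ n ∧ n ≤ M + ∑ x ∈ B, w x := by
  induction S using Finset.induction_on_max generalizing n with
  | empty => exact ⟨∅, subset_rfl, by simpa using hn₀, by simpa using hn⟩
  | insert a s ha ih =>
    have ha_notMem : a ∉ s := fun h => lt_irrefl a (ha a h)
    have hs : ∀ b ∈ s, w b ≤ M + 1 + ∑ x ∈ s with x < b, w x := by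
      intro b hb
      have hfilter : {x ∈ insert a s | x < b} = {x ∈ s | x < b} := by
        rw [Finset.filter_insert, if_neg (not_lt.2 (ha b hb).le)]
      simpa only [hfilter] using hS b (Finset.mem_insert_of_mem hb)
    have hwa : w a ≤ M + 1 + ∑ x ∈ s, w x := by
      have hfilter : {x ∈ insert a s | x < a} = s := by
        rw [Finset.filter_insert, if_neg (lt_irrefl a), Finset.filter_true_of_mem ha]
      simpa only [hfilter] using hS a (Finset.mem_insert_self a s)
    rw [Finset.sum_insert ha_notMem] at hn
    by_cases hna : w a ≤ n
    · obtain ⟨B, hBs, hB_le, hB_ge⟩ := ih hs (n := n - w a) (by linarith) (by linarith)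
      have haB : a ∉ B := fun h => ha_notMem (hBs h)
      refine ⟨insert a B, Finset.insert_subset_insert a hBs, ?_, ?_⟩ <;>
        rw [Finset.sum_insert haB] <;> linarith
    · obtain ⟨B, hBs, hB⟩ := ih hs hn₀ (by linarith)
      exact ⟨B, hBs.trans (Finset.subset_insert a s), hB⟩

theorem Finset.sum_Iio_eq_sum_Iio_add_sum_Ico {α M : Type*} [LinearOrder α]
    [LocallyFiniteOrderBot α] [LocallyFiniteOrder α] [AddCommMonoid M] (f : α → M) {a b : α}
    (hab : a ≤ b) : ∑ x ∈ Iio b, f x = ∑ x ∈ Iio a, f x + ∑ x ∈ Ico a b, f x := by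
  have hunion : Iio a ∪ Ico a b = Iio b := by
    rw [← Finset.coe_inj]
    push_cast
    exact Set.Iio_union_Ico_eq_Iio hab
  rw [← hunion, Finset.sum_union]
  exact Finset.disjoint_left.2 fun x hxa hxab =>
    (Finset.mem_Ico.1 hxab).1.not_gt (Finset.mem_Iio.1 hxa)

theorem IsChangemaker.monotone {r : ℕ} {σ : Fin r → ℤ} (hσ : IsChangemaker σ) : Monotone σ := by
  cases r with
  | zero => exact fun i => i.elim0
  | succ n =>
    refine Fin.monotone_iff_le_succ.2 fun i => ?_
    exact (hσ.2 i.succ i.succ_pos).1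

theorem IsChangemaker.one_le {r : ℕ} {σ : Fin r → ℤ} (hσ : IsChangemaker σ) (i : Fin r) :
    1 ≤ σ i :=
  (hσ.1 ⟨0, i.pos⟩ rfl).symm.le.trans (hσ.monotone (Fin.mk_le_mk.2 (Nat.zero_le i)))

theorem IsChangemaker.eq_one_of_lt_of_forall_lt {r : ℕ} {σ : Fin r → ℤ} (hσ : IsChangemaker σ)
    {m : Fin r} (hmin : ∀ j : Fin r, j < m → ¬ 1 < σ j) {i : Fin r} (hi : i < m) : σ i = 1 :=
  le_antisymm (not_lt.1 (hmin i hi)) (hσ.one_le i)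

theorem IsChangemaker.sum_lt_eq_add_sum_Ico {r : ℕ} {σ : Fin r → ℤ} (hσ : IsChangemaker σ)
    {m : Fin r} (hmin : ∀ j : Fin r, j < m → ¬ 1 < σ j) {a : Fin r} (ha : m ≤ a) :
    ∑ j ∈ Finset.univ.filter (· < a), σ j = m + ∑ j ∈ Finset.Ico m a, σ j := by
  rw [Finset.filter_gt_eq_Iio, Finset.sum_Iio_eq_sum_Iio_add_sum_Ico σ ha,
    Finset.sum_congr rfl fun i hi => hσ.eq_one_of_lt_of_forall_lt hmin (Finset.mem_Iio.1 hi)]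
  simp

theorem IsVerySlack.exists_subset_Ico_sum_le_le_add {r : ℕ} {σ : Fin r → ℤ}
    (hσ : IsVerySlack σ) {m : Fin r} (hm : 1 < σ m) (hmin : ∀ j : Fin r, j < m → ¬ 1 < σ j)
    {k : Fin r} (hmk : m ≤ k) (hk : 1 < σ k) :
    ∃ B ⊆ Finset.Ico m k, ∑ x ∈ B, σ x ≤ σ k - 1 ∧ σ k - 1 ≤ (m - 2 : ℤ) + ∑ x ∈ B, σ x := by
  obtain ⟨hcm, -, hslack⟩ := hσ
  have hgreedy : ∀ a ∈ Finset.Ico m k,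
      σ a ≤ ((m : ℤ) - 2) + 1 + ∑ x ∈ Finset.Ico m k with x < a, σ x := by
    intro a ha
    obtain ⟨hma, hak⟩ := Finset.mem_Ico.1 ha
    have ha_slack := hslack a (hm.trans_le (hcm.monotone hma))
    rw [hcm.sum_lt_eq_add_sum_Ico hmin hma] at ha_slack
    rw [Finset.Ico_filter_lt, min_eq_right hak.le]
    linarith
  have hk_slack := hslack k hk
  rw [hcm.sum_lt_eq_add_sum_Ico hmin hmk] at hk_slack
  exact exists_subset_sum_le_le_add σ _ _ hgreedy (by omega) (by linarith)

theorem IsChangemaker.exists_subset_Iio_sum_eq_card {r : ℕ} {σ : Fin r → ℤ}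
    (hσ : IsChangemaker σ) {m : Fin r} (hmin : ∀ j : Fin r, j < m → ¬ 1 < σ j) {d : ℕ}
    (hd : d ≤ m.val) : ∃ D ⊆ Finset.Iio m, D.card = d ∧ ∑ i ∈ D, σ i = d := by
  obtain ⟨D, hDm, hDcard⟩ := Finset.exists_subset_card_eq (s := Finset.Iio m) (n := d)
    (by rwa [Fin.card_Iio])
  refine ⟨D, hDm, hDcard, ?_⟩
  rw [Finset.sum_congr rfl fun i hi =>
    hσ.eq_one_of_lt_of_forall_lt hmin (Finset.mem_Iio.1 (hDm hi)), ← hDcard]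
  simp

theorem very_slack_changemaker_condition_general
    (r : ℕ) (σ : Fin r → ℤ) (hvs : IsVerySlack σ)
    (m : Fin r) (hm : 1 < σ m) (hmin : ∀ j : Fin r, j < m → ¬ 1 < σ j) :
    ∀ k : Fin r, 1 < σ k →
      ∃ A : Finset (Fin r), (∀ i ∈ A, i < k) ∧ σ k = ∑ i ∈ A, σ i ∧
        1 ≤ (A.filter (fun i => i < m)).card ∧
        (A.filter (fun i => i < m)).card ≤ m.val - 1 := by
  intro k hk
  have hmk : m ≤ k := not_lt.1 fun hkm => hmin k hkm hk
  obtain ⟨B, hBs, hB_le, hB_ge⟩ := hvs.exists_subset_Ico_sum_le_le_add hm hmin hmk hk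
  obtain ⟨D, hDm, hDcard, hD_sum⟩ := hvs.1.exists_subset_Iio_sum_eq_card hmin
    (d := (σ k - ∑ x ∈ B, σ x).toNat) (by omega)
  have hD_lt : ∀ i ∈ D, i < m := fun i hi => Finset.mem_Iio.1 (hDm hi)
  have hB_mem : ∀ i ∈ B, m ≤ i ∧ i < k := fun i hi => Finset.mem_Ico.1 (hBs hi)
  have hDB : Disjoint D B := Finset.disjoint_left.2 fun i hiD hiB =>
    (hB_mem i hiB).1.not_gt (hD_lt i hiD)
  have hfilter : (D ∪ B).filter (· < m) = D := by
    rw [Finset.filter_union, Finset.filter_true_of_mem hD_lt,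
      Finset.filter_false_of_mem fun i hi => not_lt.2 (hB_mem i hi).1, Finset.union_empty]
  refine ⟨D ∪ B, fun i hi => ?_, ?_, ?_, ?_⟩
  · rcases Finset.mem_union.1 hi with hiD | hiB
    · exact (hD_lt i hiD).trans_le hmk
    · exact (hB_mem i hiB).2
  · rw [Finset.sum_union hDB, hD_sum]
    omega
  all_goals rw [hfilter, hDcard]; omega

theorem very_slack_changemaker_condition
    (r : ℕ) (hr : 0 < r) (σ : Fin r → ℤ) (hvs : IsVerySlack σ)
    (m : Fin r) (hm : 1 < σ m) (hmin : ∀ j : Fin r, j < m → ¬ 1 < σ j) :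
    ∀ k : Fin r, 1 < σ k →
      ∃ A : Finset (Fin r), (∀ i ∈ A, i < k) ∧ σ k = ∑ i ∈ A, σ i ∧
        1 ≤ (A.filter (fun i => i < m)).card ∧
        (A.filter (fun i => i < m)).card ≤ m.val - 1 :=
  very_slack_changemaker_condition_general r σ hvs m hm hmin
end
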